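/- arXiv:2308.08895 — 5 statements merged into one kernel-verified Lean document; each statement's English description precedes it below -/
import Mathlib

section
/- Let G=(V,ω) be a connected locally finite weighted graph and Ω⊂V a finite subset with Ω°≠∅. Let p,q>1, α,β with α+1>p and β+1>q, and integers m,n≥2. Let a,b:Ω→ℝ be given functions (possibly sign-changing). Assume the set {u∈W_0^{m,p}(Ω) : Σ_{x∈Ω}ψ(x)a(x)|u(x)|^p>0} is nonempty and λ₁ := inf over this set of Σ_{x∈Ω}ψ(x)|∇^m u|^p(x) / Σ_{x∈Ω}ψ(x)a(x)|u(x)|^p is positive; define ϑ₁ analogously with b, n, q and assume ϑ₁>0. Then for every λ∈(0,λ₁) and ϑ∈(0,ϑ₁) there exists a pair (u,v) with u∈W_0^{m,p}(Ω), v∈W_0^{n,q}(Ω), (u,v)≠(0,0), such that for all φ∈W_0^{m,p}(Ω) and all φ'∈W_0^{n,q}(Ω): Σ_{x∈Ω}ψ(x)|∇^m u|^{p−2}(x)·B_m(u,φ)(x) = λΣ_{x∈Ω}ψ(x)a(x)|u(x)|^{p−2}u(x)φ(x) + ((α+1)/(α+β+2))Σ_{x∈Ω}ψ(x)|u(x)|^{α−1}u(x)|v(x)|^{β+1}φ(x),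 and Σ_{x∈Ω}ψ(x)|∇^n v|^{q−2}(x)·B_n(v,φ')(x) = ϑΣ_{x∈Ω}ψ(x)b(x)|v(x)|^{q−2}v(x)φ'(x) + ((β+1)/(α+β+2))Σ_{x∈Ω}ψ(x)|u(x)|^{α+1}|v(x)|^{β−1}v(x)φ'(x), where B_m(u,φ)=Γ(Δ^{(m−1)/2}u,Δ^{(m−1)/2}φ) if m is odd and B_m(u,φ)=Δ^{m/2}u·Δ^{m/2}φ if m is even (similarly B_n). -/
noncomputable section

/-- Vertex measure `ψ(x) = Σ_{y∼x} ω(x,y)` (zero weights contribute nothing). -/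
def psiW {V : Type*} (w : V → V → ℝ) (x : V) : ℝ := ∑' y, w x y

/-- Integral `∫_V f dψ = Σ_x ψ(x) f(x)`. -/
def intW {V : Type*} (w : V → V → ℝ) (f : V → ℝ) : ℝ := ∑' x, psiW w x * f x

/-- Graph Laplacian `Δu(x) = (1/ψ(x)) Σ_{y∼x} ω(x,y)(u(y)−u(x))`. -/
def lapW {V : Type*} (w : V → V → ℝ) (u : V → ℝ) : V → ℝ := fun x =>
  (psiW w x)⁻¹ * ∑' y, w x y * (u y - u x)

/-- Gradient form `Γ(u,v)(x)`. -/
def gammaW {V : Type*} (w : V → V → ℝ) (u v : V → ℝ) (x : V) : ℝ :=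
  (2 * psiW w x)⁻¹ * ∑' y, w x y * (u y - u x) * (v y - v x)

/-- `|∇u|(x) = Γ(u,u)(x)^{1/2}`. -/
def gradW {V : Type*} (w : V → V → ℝ) (u : V → ℝ) (x : V) : ℝ :=
  Real.sqrt (gammaW w u u x)

/-- `|∇^m u|(x)`: `|∇(Δ^{(m−1)/2}u)|(x)` for odd `m`, `|Δ^{m/2}u(x)|` for even `m`. -/
def gradmW {V : Type*} (w : V → V → ℝ) (m : ℕ) (u : V → ℝ) (x : V) : ℝ :=
  if m % 2 = 1 then gradW w ((lapW w)^[(m - 1) / 2] u) x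
  else |(lapW w)^[m / 2] u x|

/-- The `p`-Laplacian. -/
def plapW {V : Type*} (w : V → V → ℝ) (p : ℝ) (u : V → ℝ) (x : V) : ℝ :=
  (2 * psiW w x)⁻¹ *
    ∑' y, w x y * (gradW w u y ^ (p - 2) + gradW w u x ^ (p - 2)) * (u y - u x)

/-- Connectedness: any two vertices are joined by a chain of adjacent vertices. -/
def ConnW {V : Type*} (w : V → V → ℝ) : Prop :=
  ∀ x y : V, Relation.ReflTransGen (fun a b => 0 < w a b) x y

/-- Local finiteness: each vertex has finitely many neighbours. -/
def LocFinW {V : Type*} (w : V → V → ℝ) : Prop :=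
  ∀ x : V, {y : V | 0 < w x y}.Finite

/-- The first positive eigenvalue `λ₁` of `−Δ`. -/
def lambda1W {V : Type*} (w : V → V → ℝ) : ℝ :=
  sInf { r : ℝ | ∃ u : V → ℝ, u ≠ 0 ∧
    Summable (fun x => psiW w x * u x ^ 2) ∧
    HasSum (fun x => psiW w x * u x) 0 ∧
    r = intW w (fun x => gradW w u x ^ 2) / intW w (fun x => u x ^ 2) }

/-- `u` is a harmonic eigenfunction of `−Δ` with eigenvalue `λ₁`. -/
def IsEigW {V : Type*} (w : V → V → ℝ) (u : V → ℝ) : Prop :=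
  ∀ x : V, -lapW w u x = lambda1W w * u x

/-- Graph distance `ρ(x)` from `x` to `O`: minimal number of edges in a path. -/
def gdistW {V : Type*} (w : V → V → ℝ) (O x : V) : ℕ :=
  sInf { n : ℕ | ∃ f : ℕ → V, f 0 = O ∧ f n = x ∧ ∀ i < n, 0 < w (f i) (f (i + 1)) }

/-- Boundary `∂Ω` of a domain `Ω`. -/
def bdryW {V : Type*} (w : V → V → ℝ) (Ω : Set V) : Set V :=
  {x ∈ Ω | ∃ y, y ∉ Ω ∧ 0 < w x y}

/-- Interior `Ω° = Ω ∖ ∂Ω`. -/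
def intrW {V : Type*} (w : V → V → ℝ) (Ω : Set V) : Set V := Ω \ bdryW w Ω

/-- `W_0^{m,p}(Ω)` (the underlying set depends only on `m`):
functions vanishing off `Ω` whose gradients of order `< m` vanish on `∂Ω`. -/
def W0 {V : Type*} (w : V → V → ℝ) (Ω : Set V) (m : ℕ) : Set (V → ℝ) :=
  {u | (∀ x, x ∉ Ω → u x = 0) ∧ ∀ x ∈ bdryW w Ω, ∀ i < m, gradmW w i u x = 0}

/-- The bilinear form `B_m(u,φ)` appearing in the weak formulation of `𝓛_{m,p}`. -/
def BformW {V : Type*} (w : V → V → ℝ) (m : ℕ) (u φ : V → ℝ) (x : V) : ℝ :=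
  if m % 2 = 1 then
    gammaW w ((lapW w)^[(m - 1) / 2] u) ((lapW w)^[(m - 1) / 2] φ) x
  else (lapW w)^[m / 2] u x * (lapW w)^[m / 2] φ x

/-- Iterated operator `(−Δ)^m`. -/
def nlapIterW {V : Type*} (w : V → V → ℝ) (m : ℕ) (u : V → ℝ) : V → ℝ :=
  (fun f x => -lapW w f x)^[m] u

section Basics

open Finset

variable {V : Type*} {w : V → V → ℝ}

lemma wzero_of_not_adj (hnn : ∀ x y, 0 ≤ w x y) {x y : V} (h : ¬ 0 < w x y) : w x y = 0 :=
  le_antisymm (not_lt.mp h) (hnn x y)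

lemma tsum_nbr (hlf : LocFinW w) (hnn : ∀ x y, 0 ≤ w x y) (x : V) (g : V → ℝ)
    (hg : ∀ y, w x y = 0 → g y = 0) :
    ∑' y, g y = ∑ y ∈ (hlf x).toFinset, g y := by
  refine tsum_eq_sum fun b hb => hg b ?_
  exact wzero_of_not_adj hnn (by simpa [Set.Finite.mem_toFinset] using hb)

lemma lapW_eq_sum (hlf : LocFinW w) (hnn : ∀ x y, 0 ≤ w x y) (u : V → ℝ) (x : V) :
    lapW w u x = (psiW w x)⁻¹ * ∑ y ∈ (hlf x).toFinset, w x y * (u y - u x) := by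
  unfold lapW
  rw [tsum_nbr hlf hnn x _ (fun y hy => by rw [hy]; ring)]

lemma gammaW_eq_sum (hlf : LocFinW w) (hnn : ∀ x y, 0 ≤ w x y) (u v : V → ℝ) (x : V) :
    gammaW w u v x
      = (2 * psiW w x)⁻¹ * ∑ y ∈ (hlf x).toFinset, w x y * (u y - u x) * (v y - v x) := by
  unfold gammaW
  rw [tsum_nbr hlf hnn x _ (fun y hy => by rw [hy]; ring)]

lemma lapW_add (hlf : LocFinW w) (hnn : ∀ x y, 0 ≤ w x y) (u v : V → ℝ) :
    lapW w (u + v) = lapW w u + lapW w v := by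
  funext x
  simp only [Pi.add_apply, lapW_eq_sum hlf hnn]
  rw [← mul_add, ← Finset.sum_add_distrib]
  congr 1
  refine Finset.sum_congr rfl fun y _ => by ring

lemma lapW_smul (hlf : LocFinW w) (hnn : ∀ x y, 0 ≤ w x y) (c : ℝ) (u : V → ℝ) :
    lapW w (c • u) = c • lapW w u := by
  funext x
  simp only [Pi.smul_apply, smul_eq_mul, lapW_eq_sum hlf hnn]
  rw [show (∑ y ∈ (hlf x).toFinset, w x y * (c * u y - c * u x))
      = c * ∑ y ∈ (hlf x).toFinset, w x y * (u y - u x) by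
    rw [Finset.mul_sum]; exact Finset.sum_congr rfl fun y _ => by ring]
  ring

lemma lapW_iter_add (hlf : LocFinW w) (hnn : ∀ x y, 0 ≤ w x y) (k : ℕ) (u v : V → ℝ) :
    (lapW w)^[k] (u + v) = (lapW w)^[k] u + (lapW w)^[k] v := by
  induction k generalizing u v with
  | zero => rfl
  | succ k ih =>
      rw [Function.iterate_succ_apply, Function.iterate_succ_apply,
        Function.iterate_succ_apply, lapW_add hlf hnn, ih]

lemma lapW_iter_smul (hlf : LocFinW w) (hnn : ∀ x y, 0 ≤ w x y) (k : ℕ) (c : ℝ) (u : V → ℝ) :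
    (lapW w)^[k] (c • u) = c • (lapW w)^[k] u := by
  induction k generalizing u with
  | zero => rfl
  | succ k ih =>
      rw [Function.iterate_succ_apply, Function.iterate_succ_apply, lapW_smul hlf hnn, ih]

lemma lapW_zero (hlf : LocFinW w) (hnn : ∀ x y, 0 ≤ w x y) : lapW w (0 : V → ℝ) = 0 := by
  have := lapW_smul hlf hnn 0 (0 : V → ℝ)
  simpa using this

lemma lapW_iter_zero (hlf : LocFinW w) (hnn : ∀ x y, 0 ≤ w x y) (k : ℕ) :
    (lapW w)^[k] (0 : V → ℝ) = 0 := by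
  simpa using lapW_iter_smul hlf hnn k 0 0

lemma lapW_neg (u : V → ℝ) : lapW w (fun z => - u z) = fun x => - lapW w u x := by
  funext x
  unfold lapW
  rw [show (fun y => w x y * ((fun z => -u z) y - (fun z => -u z) x))
      = fun y => - (w x y * (u y - u x)) by funext y; ring]
  rw [tsum_neg]; ring

lemma gammaW_nonneg (hlf : LocFinW w) (hnn : ∀ x y, 0 ≤ w x y) (hψ : ∀ x, 0 < psiW w x)
    (u : V → ℝ) (x : V) : 0 ≤ gammaW w u u x := by
  rw [gammaW_eq_sum hlf hnn]
  refine mul_nonneg (inv_nonneg.mpr (by have := hψ x; linarith)) ?_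
  exact Finset.sum_nonneg fun y _ => by
    rw [mul_assoc]; exact mul_nonneg (hnn x y) (mul_self_nonneg _)

lemma gradW_eq_zero_iff (hlf : LocFinW w) (hnn : ∀ x y, 0 ≤ w x y) (hψ : ∀ x, 0 < psiW w x)
    (g : V → ℝ) (x : V) :
    gradW w g x = 0 ↔ ∀ y, 0 < w x y → g y = g x := by
  have h2ψ : (0:ℝ) < 2 * psiW w x := by have := hψ x; linarith
  unfold gradW
  rw [Real.sqrt_eq_zero' ]
  constructor
  · intro h y hy
    have hΓ : gammaW w g g x = 0 :=
      le_antisymm h (gammaW_nonneg hlf hnn hψ g x)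
    rw [gammaW_eq_sum hlf hnn] at hΓ
    have hsum : ∑ z ∈ (hlf x).toFinset, w x z * (g z - g x) * (g z - g x) = 0 := by
      rcases mul_eq_zero.mp hΓ with h' | h'
      · exact absurd h' (inv_pos.mpr h2ψ).ne'
      · exact h'
    have hterm := (Finset.sum_eq_zero_iff_of_nonneg (fun z _ => by
      rw [mul_assoc]; exact mul_nonneg (hnn x z) (mul_self_nonneg _))).mp hsum
    have hyf : y ∈ (hlf x).toFinset := by simpa [Set.Finite.mem_toFinset] using hy
    have := hterm y hyf
    rcases mul_eq_zero.mp this with h' | h'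
    · rcases mul_eq_zero.mp h' with h'' | h''
      · exact absurd h'' (ne_of_gt hy)
      · linarith [sub_eq_zero.mp h'']
    · linarith [sub_eq_zero.mp h']
  · intro h
    have : gammaW w g g x = 0 := by
      rw [gammaW_eq_sum hlf hnn]
      rw [Finset.sum_eq_zero fun z hz => ?_, mul_zero]
      by_cases hz' : 0 < w x z
      · rw [h z hz', sub_self, mul_zero]
      · rw [wzero_of_not_adj hnn hz', zero_mul, zero_mul]
    exact le_of_eq this

lemma gradmW_nonneg (m : ℕ) (u : V → ℝ) (x : V) : 0 ≤ gradmW w m u x := by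
  unfold gradmW
  split
  · exact Real.sqrt_nonneg _
  · exact abs_nonneg _

lemma gradmW_zero (hlf : LocFinW w) (hnn : ∀ x y, 0 ≤ w x y) (m : ℕ) (x : V) :
    gradmW w m (0 : V → ℝ) x = 0 := by
  unfold gradmW
  split
  · rw [lapW_iter_zero hlf hnn]
    unfold gradW gammaW
    rw [show (fun y => w x y * ((0:V → ℝ) y - (0:V→ℝ) x) * ((0:V→ℝ) y - (0:V→ℝ) x))
        = fun _ => (0:ℝ) by funext y; simp]
    simp
  · rw [lapW_iter_zero hlf hnn]; simp

lemma gradmW_smul (hlf : LocFinW w) (hnn : ∀ x y, 0 ≤ w x y) (m : ℕ) (c : ℝ) (u : V → ℝ)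
    (x : V) : gradmW w m (c • u) x = |c| * gradmW w m u x := by
  unfold gradmW
  split
  · rw [lapW_iter_smul hlf hnn]
    unfold gradW
    have : gammaW w (c • (lapW w)^[(m-1)/2] u) (c • (lapW w)^[(m-1)/2] u) x
        = c^2 * gammaW w ((lapW w)^[(m-1)/2] u) ((lapW w)^[(m-1)/2] u) x := by
      unfold gammaW
      rw [show (fun y => w x y * ((c • (lapW w)^[(m-1)/2] u) y - (c • (lapW w)^[(m-1)/2] u) x)
          * ((c • (lapW w)^[(m-1)/2] u) y - (c • (lapW w)^[(m-1)/2] u) x))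
          = fun y => c^2 * (w x y * ((lapW w)^[(m-1)/2] u y - (lapW w)^[(m-1)/2] u x)
            * ((lapW w)^[(m-1)/2] u y - (lapW w)^[(m-1)/2] u x)) by
        funext y; simp only [Pi.smul_apply, smul_eq_mul]; ring]
      rw [tsum_mul_left]; ring
    rw [this, Real.sqrt_mul (sq_nonneg c), Real.sqrt_sq_eq_abs]
  · rw [lapW_iter_smul hlf hnn]
    simp only [Pi.smul_apply, smul_eq_mul, abs_mul]

lemma gradmW_even_idx (j : ℕ) (u : V → ℝ) (x : V) :
    gradmW w (2 * j) u x = |(lapW w)^[j] u x| := by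
  unfold gradmW
  rw [if_neg (by omega)]
  have : 2 * j / 2 = j := by omega
  rw [this]

lemma gradmW_add_eq_zero (hlf : LocFinW w) (hnn : ∀ x y, 0 ≤ w x y) (hψ : ∀ x, 0 < psiW w x)
    (m : ℕ) (u v : V → ℝ) (x : V) (hu : gradmW w m u x = 0) (hv : gradmW w m v x = 0) :
    gradmW w m (u + v) x = 0 := by
  unfold gradmW at *
  by_cases hodd : m % 2 = 1
  · rw [if_pos hodd] at *
    rw [lapW_iter_add hlf hnn]
    rw [gradW_eq_zero_iff hlf hnn hψ] at *
    intro y hy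
    simp only [Pi.add_apply, hu y hy, hv y hy]
  · rw [if_neg hodd] at *
    rw [lapW_iter_add hlf hnn]
    simp only [Pi.add_apply, abs_eq_zero.mp hu, abs_eq_zero.mp hv, add_zero, abs_zero]

lemma W0_zero (hlf : LocFinW w) (hnn : ∀ x y, 0 ≤ w x y) (Ω : Set V) (m : ℕ) :
    (0 : V → ℝ) ∈ W0 w Ω m :=
  ⟨fun _ _ => rfl, fun x _ i _ => gradmW_zero hlf hnn i x⟩

lemma W0_add (hlf : LocFinW w) (hnn : ∀ x y, 0 ≤ w x y) (hψ : ∀ x, 0 < psiW w x)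
    {Ω : Set V} {m : ℕ} {u v : V → ℝ} (hu : u ∈ W0 w Ω m) (hv : v ∈ W0 w Ω m) :
    u + v ∈ W0 w Ω m := by
  refine ⟨fun x hx => by simp [hu.1 x hx, hv.1 x hx], fun x hx i hi => ?_⟩
  exact gradmW_add_eq_zero hlf hnn hψ i u v x (hu.2 x hx i hi) (hv.2 x hx i hi)

lemma W0_smul (hlf : LocFinW w) (hnn : ∀ x y, 0 ≤ w x y)
    {Ω : Set V} {m : ℕ} (c : ℝ) {u : V → ℝ} (hu : u ∈ W0 w Ω m) :
    c • u ∈ W0 w Ω m := by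
  refine ⟨fun x hx => by simp [hu.1 x hx], fun x hx i hi => ?_⟩
  rw [gradmW_smul hlf hnn, hu.2 x hx i hi, mul_zero]

lemma W0_mono {Ω : Set V} {m n : ℕ} (h : n ≤ m) : W0 w Ω m ⊆ W0 w Ω n :=
  fun u hu => ⟨hu.1, fun x hx i hi => hu.2 x hx i (lt_of_lt_of_le hi h)⟩

end Basics
section MasterDeriv

open Real Filter Asymptotics

lemma sqrt_rpow'' (t : ℝ) (ht : 0 ≤ t) (e : ℝ) : Real.sqrt t ^ e = t ^ (e / 2) := by
  rw [Real.sqrt_eq_rpow, ← Real.rpow_mul ht]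
  congr 1
  ring

lemma sq_rpow_abs (t : ℝ) (e : ℝ) : ((t ^ 2 : ℝ)) ^ e = |t| ^ (2 * e) := by
  rw [← sq_abs t, ← Real.rpow_natCast |t| 2, ← Real.rpow_mul (abs_nonneg t)]
  norm_num

variable {X : Type*} [NormedAddCommGroup X] [NormedSpace ℝ X]

lemma master_fderiv {ι : Type*} (J : Finset ι) (ℓ : ι → (X →L[ℝ] ℝ)) (r : ℝ)
    (hr : 1 < 2 * r) (u : X) :
    HasFDerivAt (fun z => (∑ j ∈ J, (ℓ j z) ^ 2) ^ r)
      ((2 * r * (∑ j ∈ J, (ℓ j u) ^ 2) ^ (r - 1)) • (∑ j ∈ J, ℓ j u • ℓ j)) u := by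
  have hr0 : r ≠ 0 := by intro h; rw [h] at hr; norm_num at hr
  have hQ : HasFDerivAt (fun z => ∑ j ∈ J, (ℓ j z) ^ 2) (∑ j ∈ J, (2 * ℓ j u) • ℓ j) u := by
    refine HasFDerivAt.fun_sum fun j _ => ?_
    have h1 : HasFDerivAt (fun z => ℓ j z * ℓ j z) (ℓ j u • ℓ j + ℓ j u • ℓ j) u :=
      ((ℓ j).hasFDerivAt).mul ((ℓ j).hasFDerivAt)
    have h2 : (fun z => (ℓ j z) ^ 2) = fun z => ℓ j z * ℓ j z := by funext z; ring
    rw [h2]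
    refine h1.congr_fderiv ?_
    ext v
    simp only [ContinuousLinearMap.add_apply, ContinuousLinearMap.smul_apply, smul_eq_mul]
    ring
  set Q : X → ℝ := fun z => ∑ j ∈ J, (ℓ j z) ^ 2 with hQdef
  have hQnn : ∀ z, 0 ≤ Q z := fun z => Finset.sum_nonneg fun j _ => sq_nonneg _
  rcases eq_or_lt_of_le (hQnn u) with hz | hpos
  · -- degenerate case: Q u = 0
    have hjz : ∀ j ∈ J, ℓ j u = 0 := by
      intro j hj
      have := (Finset.sum_eq_zero_iff_of_nonneg (fun j _ => sq_nonneg (ℓ j u))).mp hz.symm j hj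
      exact pow_eq_zero_iff (by norm_num) |>.mp this
    have hD0 : (∑ j ∈ J, ℓ j u • ℓ j) = 0 :=
      Finset.sum_eq_zero fun j hj => by rw [hjz j hj, zero_smul]
    rw [hD0, smul_zero]
    rw [hasFDerivAt_iff_isLittleO_nhds_zero]
    have hQzero : Q u = 0 := hz.symm
    have hQplus : ∀ h : X, Q (u + h) = Q h := by
      intro h
      refine Finset.sum_congr rfl fun j hj => ?_
      rw [map_add, hjz j hj, zero_add]
    have hfu : Q u ^ r = 0 := by rw [hQzero, Real.zero_rpow hr0]
    set C : ℝ := ∑ j ∈ J, ‖ℓ j‖ ^ 2 with hC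
    have hCnn : 0 ≤ C := Finset.sum_nonneg fun j _ => sq_nonneg _
    have hQle : ∀ h : X, Q h ≤ C * ‖h‖ ^ 2 := by
      intro h
      rw [Finset.sum_mul]
      refine Finset.sum_le_sum fun j _ => ?_
      have h1 : |ℓ j h| ≤ ‖ℓ j‖ * ‖h‖ := by
        simpa [Real.norm_eq_abs] using (ℓ j).le_opNorm h
      calc (ℓ j h) ^ 2 = |ℓ j h| ^ 2 := (sq_abs _).symm
        _ ≤ (‖ℓ j‖ * ‖h‖) ^ 2 := by
            exact pow_le_pow_left₀ (abs_nonneg _) h1 2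
        _ = ‖ℓ j‖ ^ 2 * ‖h‖ ^ 2 := by ring
    have hbound : ∀ h : X, ‖Q (u + h) ^ r‖ ≤ (C ^ r * ‖h‖ ^ (2 * r - 1)) * ‖h‖ := by
      intro h
      rw [hQplus h, Real.norm_eq_abs, abs_of_nonneg (Real.rpow_nonneg (hQnn h) r)]
      calc Q h ^ r ≤ (C * ‖h‖ ^ 2) ^ r :=
            Real.rpow_le_rpow (hQnn h) (hQle h) (by linarith)
        _ = C ^ r * (‖h‖ ^ (2:ℕ)) ^ r := Real.mul_rpow hCnn (by positivity)
        _ = C ^ r * ‖h‖ ^ ((2:ℝ) * r) := by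
            rw [← Real.rpow_natCast ‖h‖ 2, ← Real.rpow_mul (norm_nonneg h)]
            norm_num
        _ = C ^ r * (‖h‖ ^ (2 * r - 1) * ‖h‖ ^ (1:ℝ)) := by
            rw [← Real.rpow_add' (norm_nonneg h) (by linarith)]
            norm_num
        _ = (C ^ r * ‖h‖ ^ (2 * r - 1)) * ‖h‖ := by rw [Real.rpow_one]; ring
    have htend : Tendsto (fun h : X => C ^ r * ‖h‖ ^ (2 * r - 1)) (nhds 0) (nhds 0) := by
      have h1 : Tendsto (fun h : X => ‖h‖) (nhds 0) (nhds 0) := by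
        simpa using tendsto_norm_zero
      have h2 : ContinuousAt (fun t : ℝ => t ^ (2 * r - 1)) 0 :=
        Real.continuousAt_rpow_const 0 (2 * r - 1) (Or.inr (by linarith))
      have h3 : Tendsto (fun h : X => ‖h‖ ^ (2 * r - 1)) (nhds 0) (nhds 0) := by
        have := h2.tendsto.comp h1
        simpa [Function.comp_def, Real.zero_rpow (show 2 * r - 1 ≠ 0 by linarith)] using this
      simpa using h3.const_mul (C ^ r)
    rw [isLittleO_iff]
    intro ε hε
    filter_upwards [htend.eventually (eventually_le_nhds hε)] with h hh
    calc ‖Q (u + h) ^ r - Q u ^ r - (0 : X →L[ℝ] ℝ) h‖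
        = ‖Q (u + h) ^ r‖ := by simp [hfu]
      _ ≤ (C ^ r * ‖h‖ ^ (2 * r - 1)) * ‖h‖ := hbound h
      _ ≤ ε * ‖h‖ := by
          exact mul_le_mul_of_nonneg_right hh (norm_nonneg h)
  · -- Q u > 0
    have hd : HasDerivAt (fun t : ℝ => t ^ r) (r * Q u ^ (r - 1)) (Q u) :=
      Real.hasDerivAt_rpow_const (Or.inl hpos.ne')
    have := hd.comp_hasFDerivAt u hQ
    refine this.congr_fderiv ?_
    ext v
    simp only [ContinuousLinearMap.smul_apply, ContinuousLinearMap.sum_apply,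
      ContinuousLinearMap.smul_apply, smul_eq_mul, Finset.mul_sum]
    refine Finset.sum_congr rfl fun j _ => by ring

end MasterDeriv
section FunctionalDeriv

open Real

variable {V : Type*} {w : V → V → ℝ}
variable {X : Type*} [NormedAddCommGroup X] [NormedSpace ℝ X] [FiniteDimensional ℝ X]

lemma toCLM (f : X → ℝ) (hadd : ∀ a b, f (a + b) = f a + f b)
    (hsmul : ∀ (c : ℝ) a, f (c • a) = c * f a) :
    ∃ L : X →L[ℝ] ℝ, ∀ a, L a = f a := by
  refine ⟨LinearMap.toContinuousLinearMap
    { toFun := f, map_add' := hadd, map_smul' := hsmul }, fun a => rfl⟩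

lemma master1_fderiv (e : X →L[ℝ] ℝ) (r : ℝ) (hr : 1 < 2 * r) (u : X) :
    HasFDerivAt (fun z => ((e z) ^ 2) ^ r) ((2 * r * ((e u) ^ 2) ^ (r - 1) * e u) • e) u := by
  have h := master_fderiv ({()} : Finset Unit) (fun _ => e) r hr u
  simp only [Finset.sum_singleton] at h
  convert h using 1
  ext v
  simp only [ContinuousLinearMap.smul_apply, smul_eq_mul]
  ring

lemma rep_exists (hlf : LocFinW w) (hnn : ∀ x y, 0 ≤ w x y) (hψ : ∀ x, 0 < psiW w x)
    (T : X → (V → ℝ)) (hTadd : ∀ a b, T (a + b) = T a + T b)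
    (hTsmul : ∀ (c : ℝ) a, T (c • a) = c • T a) (m : ℕ) (x : V) :
    ∃ (J : Finset V) (ℓ : V → (X →L[ℝ] ℝ)),
      (∀ y, gradmW w m (T y) x = Real.sqrt (∑ j ∈ J, (ℓ j y) ^ 2)) ∧
      (∀ y z, BformW w m (T y) (T z) x = ∑ j ∈ J, ℓ j y * ℓ j z) := by
  by_cases hodd : m % 2 = 1
  · -- odd case
    set k := (m - 1) / 2 with hk
    set g : X → V → ℝ := fun y => (lapW w)^[k] (T y) with hg
    have gadd : ∀ a b z, g (a + b) z = g a z + g b z := by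
      intro a b z
      rw [hg]; simp only []
      rw [hTadd, lapW_iter_add hlf hnn, Pi.add_apply]
    have gsmul : ∀ (c : ℝ) a z, g (c • a) z = c * g a z := by
      intro c a z
      rw [hg]; simp only []
      rw [hTsmul, lapW_iter_smul hlf hnn, Pi.smul_apply, smul_eq_mul]
    have hex : ∀ j : V, ∃ L : X →L[ℝ] ℝ, ∀ y,
        L y = Real.sqrt ((2 * psiW w x)⁻¹ * w x j) * (g y j - g y x) := by
      intro j
      refine toCLM _ (fun a b => ?_) (fun c a => ?_)
      · rw [gadd, gadd]; ring
      · rw [gsmul, gsmul]; ring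
    choose ℓ hℓ using hex
    have hcnn : ∀ j, 0 ≤ (2 * psiW w x)⁻¹ * w x j := fun j =>
      mul_nonneg (inv_nonneg.mpr (by have := hψ x; linarith)) (hnn x j)
    have hsq : ∀ j y z, ℓ j y * ℓ j z
        = ((2 * psiW w x)⁻¹ * w x j) * ((g y j - g y x) * (g z j - g z x)) := by
      intro j y z
      rw [hℓ, hℓ]
      rw [show Real.sqrt ((2 * psiW w x)⁻¹ * w x j) * (g y j - g y x) *
          (Real.sqrt ((2 * psiW w x)⁻¹ * w x j) * (g z j - g z x))
        = (Real.sqrt ((2 * psiW w x)⁻¹ * w x j) * Real.sqrt ((2 * psiW w x)⁻¹ * w x j)) *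
          ((g y j - g y x) * (g z j - g z x)) by ring]
      rw [Real.mul_self_sqrt (hcnn j)]
    have hgam : ∀ y z, gammaW w (g y) (g z) x = ∑ j ∈ (hlf x).toFinset, ℓ j y * ℓ j z := by
      intro y z
      rw [gammaW_eq_sum hlf hnn, Finset.mul_sum]
      refine Finset.sum_congr rfl fun j _ => ?_
      rw [hsq]; ring
    refine ⟨(hlf x).toFinset, ℓ, fun y => ?_, fun y z => ?_⟩
    · unfold gradmW
      rw [if_pos hodd]
      unfold gradW
      have h' : gammaW w (g y) (g y) x = ∑ j ∈ (hlf x).toFinset, (ℓ j y) ^ 2 := by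
        rw [hgam y y]
        exact Finset.sum_congr rfl fun j _ => (sq (ℓ j y)).symm
      exact congrArg Real.sqrt h'
    · unfold BformW
      rw [if_pos hodd]
      exact hgam y z
  · -- even case
    set k := m / 2 with hk
    obtain ⟨L, hL⟩ := toCLM (fun y => (lapW w)^[k] (T y) x)
      (fun a b => by
        show (lapW w)^[k] (T (a + b)) x = (lapW w)^[k] (T a) x + (lapW w)^[k] (T b) x
        rw [hTadd, lapW_iter_add hlf hnn, Pi.add_apply])
      (fun c a => by
        show (lapW w)^[k] (T (c • a)) x = c * (lapW w)^[k] (T a) x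
        rw [hTsmul, lapW_iter_smul hlf hnn, Pi.smul_apply, smul_eq_mul])
    refine ⟨{x}, fun _ => L, fun y => ?_, fun y z => ?_⟩
    · unfold gradmW
      rw [if_neg hodd, Finset.sum_singleton, hL, ← hk, Real.sqrt_sq_eq_abs]
    · unfold BformW
      rw [if_neg hodd, Finset.sum_singleton, hL, hL, ← hk]

lemma gradm_sum_hasFDerivAt (hlf : LocFinW w) (hnn : ∀ x y, 0 ≤ w x y)
    (hψ : ∀ x, 0 < psiW w x)
    (T : X → (V → ℝ)) (hTadd : ∀ a b, T (a + b) = T a + T b)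
    (hTsmul : ∀ (c : ℝ) a, T (c • a) = c • T a) (m : ℕ) (s : Finset V) (c : V → ℝ)
    (p : ℝ) (hp : 1 < p) (y₀ : X) :
    ∃ D : X →L[ℝ] ℝ,
      HasFDerivAt (fun y => ∑ x ∈ s, c x * gradmW w m (T y) x ^ p) D y₀ ∧
      ∀ η, D η = ∑ x ∈ s, c x *
        (p * (gradmW w m (T y₀) x ^ (p - 2) * BformW w m (T y₀) (T η) x)) := by
  have hrep := fun x => rep_exists hlf hnn hψ T hTadd hTsmul m x
  choose J ℓ h1 h2 using hrep
  have hQnn : ∀ x y, (0:ℝ) ≤ ∑ j ∈ J x, (ℓ x j y) ^ 2 := fun x y =>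
    Finset.sum_nonneg fun j _ => sq_nonneg _
  have hfun : (fun y => ∑ x ∈ s, c x * gradmW w m (T y) x ^ p)
      = fun y => ∑ x ∈ s, c x * (∑ j ∈ J x, (ℓ x j y) ^ 2) ^ (p / 2) := by
    funext y
    refine Finset.sum_congr rfl fun x _ => ?_
    rw [h1, sqrt_rpow'' _ (hQnn x y)]
  have hder : ∀ x ∈ s, HasFDerivAt
      (fun y => c x * (∑ j ∈ J x, (ℓ x j y) ^ 2) ^ (p / 2))
      (c x • ((2 * (p / 2) * (∑ j ∈ J x, (ℓ x j y₀) ^ 2) ^ (p / 2 - 1)) •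
        (∑ j ∈ J x, ℓ x j y₀ • ℓ x j))) y₀ := fun x _ =>
    (master_fderiv (J x) (ℓ x) (p / 2) (by linarith) y₀).const_mul (c x)
  refine ⟨∑ x ∈ s, c x • ((2 * (p / 2) * (∑ j ∈ J x, (ℓ x j y₀) ^ 2) ^ (p / 2 - 1)) •
      (∑ j ∈ J x, ℓ x j y₀ • ℓ x j)), ?_, fun η => ?_⟩
  · rw [hfun]; exact HasFDerivAt.fun_sum hder
  rw [ContinuousLinearMap.sum_apply]
  refine Finset.sum_congr rfl fun x hx => ?_
  simp only [ContinuousLinearMap.smul_apply, ContinuousLinearMap.sum_apply, smul_eq_mul]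
  rw [show (∑ j ∈ J x, ℓ x j y₀ * ℓ x j η) = BformW w m (T y₀) (T η) x from (h2 x y₀ η).symm]
  rw [show gradmW w m (T y₀) x ^ (p - 2) = (∑ j ∈ J x, (ℓ x j y₀) ^ 2) ^ (p / 2 - 1) by
    rw [h1, sqrt_rpow'' _ (hQnn x y₀)]; congr 1; ring]
  ring

end FunctionalDeriv
section CouplingDeriv

open Real

variable {V : Type*} {w : V → V → ℝ}
variable {X1 X2 : Type*} [NormedAddCommGroup X1] [NormedSpace ℝ X1] [FiniteDimensional ℝ X1]
  [NormedAddCommGroup X2] [NormedSpace ℝ X2] [FiniteDimensional ℝ X2]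

lemma coupling_hasFDerivAt
    (T1 : X1 → (V → ℝ)) (hT1add : ∀ a b, T1 (a + b) = T1 a + T1 b)
    (hT1smul : ∀ (c : ℝ) a, T1 (c • a) = c • T1 a)
    (T2 : X2 → (V → ℝ)) (hT2add : ∀ a b, T2 (a + b) = T2 a + T2 b)
    (hT2smul : ∀ (c : ℝ) a, T2 (c • a) = c • T2 a)
    (s : Finset V) (c : V → ℝ) (a1 a2 : ℝ) (ha1 : 1 < a1) (ha2 : 1 < a2)
    (z₀ : X1 × X2) :
    ∃ D : (X1 × X2) →L[ℝ] ℝ,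
      HasFDerivAt (fun z => ∑ x ∈ s, c x * (|T1 z.1 x| ^ a1 * |T2 z.2 x| ^ a2)) D z₀ ∧
      (∀ η : X1, D (η, 0) = ∑ x ∈ s, c x *
        ((a1 * (|T1 z₀.1 x| ^ (a1 - 2) * (T1 z₀.1 x * T1 η x))) * |T2 z₀.2 x| ^ a2)) ∧
      (∀ η : X2, D (0, η) = ∑ x ∈ s, c x *
        (|T1 z₀.1 x| ^ a1 * (a2 * (|T2 z₀.2 x| ^ (a2 - 2) * (T2 z₀.2 x * T2 η x))))) := by
  have hev1 : ∀ x : V, ∃ L : X1 →L[ℝ] ℝ, ∀ y, L y = T1 y x := fun x =>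
    toCLM _ (fun a b => by rw [hT1add]; rfl) (fun cc a => by rw [hT1smul]; rfl)
  have hev2 : ∀ x : V, ∃ L : X2 →L[ℝ] ℝ, ∀ y, L y = T2 y x := fun x =>
    toCLM _ (fun a b => by rw [hT2add]; rfl) (fun cc a => by rw [hT2smul]; rfl)
  choose e1 he1 using hev1
  choose e2 he2 using hev2
  have habs1 : ∀ (y : X1) (x : V) (e : ℝ), |T1 y x| ^ e = ((e1 x y) ^ 2) ^ (e / 2) := by
    intro y x e
    rw [he1, sq_rpow_abs]
    congr 1; ring
  have habs2 : ∀ (y : X2) (x : V) (e : ℝ), |T2 y x| ^ e = ((e2 x y) ^ 2) ^ (e / 2) := by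
    intro y x e
    rw [he2, sq_rpow_abs]
    congr 1; ring
  have hfun : (fun z : X1 × X2 => ∑ x ∈ s, c x * (|T1 z.1 x| ^ a1 * |T2 z.2 x| ^ a2))
      = fun z => ∑ x ∈ s, c x *
        (((e1 x z.1) ^ 2) ^ (a1 / 2) * ((e2 x z.2) ^ 2) ^ (a2 / 2)) := by
    funext z
    exact Finset.sum_congr rfl fun x _ => by rw [habs1, habs2]
  have hder : ∀ x ∈ s, HasFDerivAt
      (fun z : X1 × X2 => c x * (((e1 x z.1) ^ 2) ^ (a1 / 2) * ((e2 x z.2) ^ 2) ^ (a2 / 2)))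
      (c x • ((((e1 x z₀.1) ^ 2) ^ (a1 / 2)) •
          (((2 * (a2 / 2) * ((e2 x z₀.2) ^ 2) ^ (a2 / 2 - 1) * e2 x z₀.2) • e2 x).comp
            (ContinuousLinearMap.snd ℝ X1 X2)) +
        (((e2 x z₀.2) ^ 2) ^ (a2 / 2)) •
          (((2 * (a1 / 2) * ((e1 x z₀.1) ^ 2) ^ (a1 / 2 - 1) * e1 x z₀.1) • e1 x).comp
            (ContinuousLinearMap.fst ℝ X1 X2)))) z₀ := by
    intro x _
    have hf1 : HasFDerivAt (fun z : X1 × X2 => ((e1 x z.1) ^ 2) ^ (a1 / 2))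
        (((2 * (a1 / 2) * ((e1 x z₀.1) ^ 2) ^ (a1 / 2 - 1) * e1 x z₀.1) • e1 x).comp
          (ContinuousLinearMap.fst ℝ X1 X2)) z₀ :=
      (master1_fderiv (e1 x) (a1 / 2) (by linarith) z₀.1).comp z₀ hasFDerivAt_fst
    have hf2 : HasFDerivAt (fun z : X1 × X2 => ((e2 x z.2) ^ 2) ^ (a2 / 2))
        (((2 * (a2 / 2) * ((e2 x z₀.2) ^ 2) ^ (a2 / 2 - 1) * e2 x z₀.2) • e2 x).comp
          (ContinuousLinearMap.snd ℝ X1 X2)) z₀ :=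
      (master1_fderiv (e2 x) (a2 / 2) (by linarith) z₀.2).comp z₀ hasFDerivAt_snd
    exact (hf1.mul hf2).const_mul (c x)
  refine ⟨_, by rw [hfun]; exact HasFDerivAt.fun_sum hder, fun η => ?_, fun η => ?_⟩
  · rw [ContinuousLinearMap.sum_apply]
    refine Finset.sum_congr rfl fun x hx => ?_
    simp only [ContinuousLinearMap.smul_apply, ContinuousLinearMap.add_apply,
      ContinuousLinearMap.comp_apply, ContinuousLinearMap.coe_fst', ContinuousLinearMap.coe_snd',
      smul_eq_mul, map_zero]
    rw [habs1 z₀.1 x (a1 - 2), habs2 z₀.2 x a2, he1, he1]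
    rw [show (a1 - 2) / 2 = a1 / 2 - 1 by ring]
    ring
  · rw [ContinuousLinearMap.sum_apply]
    refine Finset.sum_congr rfl fun x hx => ?_
    simp only [ContinuousLinearMap.smul_apply, ContinuousLinearMap.add_apply,
      ContinuousLinearMap.comp_apply, ContinuousLinearMap.coe_fst', ContinuousLinearMap.coe_snd',
      smul_eq_mul, map_zero]
    rw [habs1 z₀.1 x a1, habs2 z₀.2 x (a2 - 2), he2, he2]
    rw [show (a2 - 2) / 2 = a2 / 2 - 1 by ring]
    ring

end CouplingDeriv
section MaxPrinciple

open Finset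

variable {V : Type*} {w : V → V → ℝ}

lemma lapW_const_add (c : ℝ) (u : V → ℝ) : lapW w (fun z => c + u z) = lapW w u := by
  funext x
  unfold lapW
  congr 1
  exact tsum_congr fun y => by ring

lemma lapW_iter_const_add (c : ℝ) (u : V → ℝ) {k : ℕ} (hk : 1 ≤ k) :
    (lapW w)^[k] (fun z => c + u z) = (lapW w)^[k] u := by
  obtain ⟨k', rfl⟩ : ∃ k', k = k' + 1 := ⟨k - 1, by omega⟩
  rw [Function.iterate_succ_apply, Function.iterate_succ_apply, lapW_const_add]

lemma gradmW_const_add {m : ℕ} (hm : 2 ≤ m) (c : ℝ) (u : V → ℝ) (x : V) :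
    gradmW w m (fun z => c + u z) x = gradmW w m u x := by
  unfold gradmW
  by_cases hodd : m % 2 = 1
  · rw [if_pos hodd, if_pos hodd, lapW_iter_const_add c u (by omega)]
  · rw [if_neg hodd, if_neg hodd, lapW_iter_const_add c u (by omega)]

lemma lapW_sum_eq_zero (hlf : LocFinW w) (hnn : ∀ x y, 0 ≤ w x y) (hψ : ∀ x, 0 < psiW w x)
    {u : V → ℝ} {x : V} (h : lapW w u x = 0) :
    ∑ y ∈ (hlf x).toFinset, w x y * (u y - u x) = 0 := by
  rw [lapW_eq_sum hlf hnn] at h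
  rcases mul_eq_zero.mp h with h' | h'
  · exact absurd h' (inv_ne_zero (hψ x).ne')
  · exact h'

lemma harmonic_step (hlf : LocFinW w) (hnn : ∀ x y, 0 ≤ w x y) (hψ : ∀ x, 0 < psiW w x)
    {u : V → ℝ} {x : V} (hlap : lapW w u x = 0)
    (hmax : ∀ y, 0 < w x y → u y ≤ u x) : ∀ y, 0 < w x y → u y = u x := by
  intro y hy
  have hsum := lapW_sum_eq_zero hlf hnn hψ hlap
  have hterm : ∀ z ∈ (hlf x).toFinset, w x z * (u z - u x) ≤ 0 := by
    intro z hz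
    have hz' : 0 < w x z := by simpa [Set.Finite.mem_toFinset] using hz
    exact mul_nonpos_of_nonneg_of_nonpos hz'.le (by linarith [hmax z hz'])
  have h0 := (Finset.sum_eq_zero_iff_of_nonpos hterm).mp hsum y
    (by simpa [Set.Finite.mem_toFinset] using hy)
  rcases mul_eq_zero.mp h0 with h' | h'
  · exact absurd h' hy.ne'
  · linarith [sub_eq_zero.mp h']

lemma mp_le_zero (hlf : LocFinW w) (hnn : ∀ x y, 0 ≤ w x y) (hψ : ∀ x, 0 < psiW w x)
    {Ω : Set V} (hΩ : Ω.Finite) (hne : Ω.Nonempty) {o : V} (ho : o ∉ Ω) (hconn : ConnW w)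
    (h : V → ℝ) (hbd : ∀ x ∈ bdryW w Ω, h x = 0) (hharm : ∀ x ∈ Ω, lapW w h x = 0) :
    ∀ x ∈ Ω, h x ≤ 0 := by
  obtain ⟨z, hz⟩ := hne
  obtain ⟨xm, hxmF, hmax⟩ := Finset.exists_max_image hΩ.toFinset h
    ⟨z, (Set.Finite.mem_toFinset hΩ).mpr hz⟩
  have hxmΩ : xm ∈ Ω := (Set.Finite.mem_toFinset hΩ).mp hxmF
  have key : ∀ s, Relation.ReflTransGen (fun a b => 0 < w a b) s o →
      s ∈ Ω → h s = h xm → h xm ≤ 0 := by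
    intro s hs
    induction hs using Relation.ReflTransGen.head_induction_on with
    | refl => intro hsΩ _; exact absurd hsΩ ho
    | @head a c hac hco ih =>
        intro haΩ hha
        by_cases habd : a ∈ bdryW w Ω
        · rw [← hha, hbd a habd]
        · have hnbr : ∀ y, 0 < w a y → y ∈ Ω := by
            intro y hy
            by_contra hyΩ
            exact habd ⟨haΩ, y, hyΩ, hy⟩
          have hmax' : ∀ y, 0 < w a y → h y ≤ h a := by
            intro y hy
            rw [hha]
            exact hmax y ((Set.Finite.mem_toFinset hΩ).mpr (hnbr y hy))
          have hstep := harmonic_step hlf hnn hψ (hharm a haΩ) hmax'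
          exact ih (hnbr c hac) (by rw [hstep c hac, hha])
  intro x hx
  have h1 : h x ≤ h xm := hmax x ((Set.Finite.mem_toFinset hΩ).mpr hx)
  have h2 : h xm ≤ 0 := key xm (hconn xm o) hxmΩ rfl
  linarith

lemma mp_zero (hlf : LocFinW w) (hnn : ∀ x y, 0 ≤ w x y) (hψ : ∀ x, 0 < psiW w x)
    {Ω : Set V} (hΩ : Ω.Finite) (hne : Ω.Nonempty) {o : V} (ho : o ∉ Ω) (hconn : ConnW w)
    (h : V → ℝ) (hbd : ∀ x ∈ bdryW w Ω, h x = 0) (hharm : ∀ x ∈ Ω, lapW w h x = 0) :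
    ∀ x ∈ Ω, h x = 0 := by
  intro x hx
  have h1 := mp_le_zero hlf hnn hψ hΩ hne ho hconn h hbd hharm x hx
  have h2 := mp_le_zero hlf hnn hψ hΩ hne ho hconn (fun z => - h z)
    (fun z hz => by show - h z = 0; rw [hbd z hz]; ring)
    (fun z hz => by rw [lapW_neg]; show - lapW w h z = 0; rw [hharm z hz]; ring) x hx
  have h2' : - h x ≤ 0 := h2
  linarith

lemma locconst_zero (hconn : ConnW w) {Ω : Set V} {o : V} (ho : o ∉ Ω) (g : V → ℝ)
    (hbd : ∀ x ∈ bdryW w Ω, g x = 0) (hloc : ∀ x ∈ Ω, ∀ y, 0 < w x y → g y = g x) :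
    ∀ x ∈ Ω, g x = 0 := by
  have key : ∀ s, Relation.ReflTransGen (fun a b => 0 < w a b) s o → s ∈ Ω → g s = 0 := by
    intro s hs
    induction hs using Relation.ReflTransGen.head_induction_on with
    | refl => intro hsΩ; exact absurd hsΩ ho
    | @head a c hac hco ih =>
        intro haΩ
        by_cases hcΩ : c ∈ Ω
        · rw [← hloc a haΩ c hac]
          exact ih hcΩ
        · exact hbd a ⟨haΩ, c, hcΩ, hac⟩
  exact fun x hx => key x (hconn x o) hx

lemma harm_const (hlf : LocFinW w) (hnn : ∀ x y, 0 ≤ w x y) (hψ : ∀ x, 0 < psiW w x)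
    (hconn : ConnW w) (hfin : (Set.univ : Set V).Finite)
    (g : V → ℝ) (hharm : ∀ x, lapW w g x = 0) : ∀ x y, g x = g y := by
  intro x y
  obtain ⟨xm, _, hmax⟩ := Finset.exists_max_image hfin.toFinset g
    ⟨x, (Set.Finite.mem_toFinset hfin).mpr trivial⟩
  have hmax' : ∀ z, g z ≤ g xm := fun z =>
    hmax z ((Set.Finite.mem_toFinset hfin).mpr trivial)
  have key : ∀ s t, Relation.ReflTransGen (fun a b => 0 < w a b) s t →
      g s = g xm → g t = g xm := by
    intro s t hst
    induction hst with
    | refl => exact id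
    | @tail b c hsb hbc ih =>
        intro hs
        have hb := ih hs
        have := harmonic_step hlf hnn hψ (hharm b)
          (fun z _ => by rw [hb]; exact hmax' z) c hbc
        rw [this, hb]
    
  rw [key xm x (hconn xm x) rfl, key xm y (hconn xm y) rfl]

lemma locconst_const (hconn : ConnW w) (g : V → ℝ)
    (hloc : ∀ x y, 0 < w x y → g y = g x) : ∀ x y, g x = g y := by
  intro x y
  induction hconn x y with
  | refl => rfl
  | @tail b c hsb hbc ih => rw [ih, ← hloc b c hbc]

lemma lap_const_zero (hsymm : ∀ x y, w x y = w y x) (hnn : ∀ x y, 0 ≤ w x y)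
    (hlf : LocFinW w) (hψ : ∀ x, 0 < psiW w x) (hfin : (Set.univ : Set V).Finite)
    (x₀ : V) (f : V → ℝ) (cst : ℝ) (hc : ∀ x, lapW w f x = cst) : cst = 0 := by
  set F := hfin.toFinset with hF
  have hFmem : ∀ x : V, x ∈ F := fun x => (Set.Finite.mem_toFinset hfin).mpr trivial
  have h1 : ∀ x, psiW w x * lapW w f x = ∑ y ∈ F, w x y * (f y - f x) := by
    intro x
    rw [lapW_eq_sum hlf hnn, ← mul_assoc, mul_inv_cancel₀ (hψ x).ne', one_mul]
    refine Finset.sum_subset (fun y _ => hFmem y) (fun y _ hy => ?_)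
    have hwy : ¬ 0 < w x y := by simpa [Set.Finite.mem_toFinset] using hy
    rw [wzero_of_not_adj hnn hwy, zero_mul]
  have e1 : ∑ x ∈ F, ∑ y ∈ F, w x y * (f y - f x)
      = ∑ x ∈ F, ∑ y ∈ F, w y x * (f x - f y) := Finset.sum_comm
  have e2 : ∑ x ∈ F, ∑ y ∈ F, w y x * (f x - f y)
      = - ∑ x ∈ F, ∑ y ∈ F, w x y * (f y - f x) := by
    rw [← Finset.sum_neg_distrib]
    refine Finset.sum_congr rfl fun x _ => ?_
    rw [← Finset.sum_neg_distrib]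
    refine Finset.sum_congr rfl fun y _ => ?_
    rw [hsymm y x]; ring
  have hT : ∑ x ∈ F, ∑ y ∈ F, w x y * (f y - f x) = 0 := by linarith [e1.trans e2]
  have h3 : (∑ x ∈ F, psiW w x) * cst = 0 := by
    rw [Finset.sum_mul]
    rw [show ∑ x ∈ F, psiW w x * cst = ∑ x ∈ F, ∑ y ∈ F, w x y * (f y - f x) from
      Finset.sum_congr rfl fun x _ => by rw [← hc x]; exact h1 x]
    exact hT
  have h5 : 0 < ∑ x ∈ F, psiW w x := Finset.sum_pos (fun x _ => hψ x) ⟨x₀, hFmem x₀⟩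
  exact (mul_eq_zero.mp h3).resolve_left h5.ne'

lemma W0_vanish (hlf : LocFinW w) (hnn : ∀ x y, 0 ≤ w x y) (hψ : ∀ x, 0 < psiW w x)
    (hconn : ConnW w) {Ω : Set V} (hΩf : Ω.Finite) (hne : Ω.Nonempty)
    {o : V} (ho : o ∉ Ω) {m : ℕ} (hm : 1 ≤ m) {u : V → ℝ} (hu : u ∈ W0 w Ω m)
    (hg : ∀ x ∈ Ω, gradmW w m u x = 0) : ∀ z, u z = 0 := by
  obtain ⟨K, hKle, hKstart⟩ : ∃ K : ℕ, 2 * K ≤ m ∧ ∀ x ∈ Ω, (lapW w)^[K] u x = 0 := by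
    by_cases hodd : m % 2 = 1
    · refine ⟨(m - 1) / 2, by omega, ?_⟩
      have hloc : ∀ x ∈ Ω, ∀ y, 0 < w x y →
          (lapW w)^[(m-1)/2] u y = (lapW w)^[(m-1)/2] u x := by
        intro x hx y hy
        have h' := hg x hx
        unfold gradmW at h'
        rw [if_pos hodd] at h'
        exact (gradW_eq_zero_iff hlf hnn hψ _ x).mp h' y hy
      have hbd : ∀ x ∈ bdryW w Ω, (lapW w)^[(m-1)/2] u x = 0 := by
        intro x hx
        have h2 : 2 * ((m-1)/2) < m := by omega
        have := hu.2 x hx (2 * ((m-1)/2)) h2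
        rwa [gradmW_even_idx, abs_eq_zero] at this
      exact locconst_zero hconn ho _ hbd hloc
    · refine ⟨m / 2, by omega, fun x hx => ?_⟩
      have h' := hg x hx
      unfold gradmW at h'
      rw [if_neg hodd] at h'
      exact abs_eq_zero.mp h'
  have DOWN : ∀ i, i ≤ K → ∀ x ∈ Ω, (lapW w)^[K - i] u x = 0 := by
    intro i
    induction i with
    | zero => intro _; simpa using hKstart
    | succ i ih =>
        intro hi x hx
        have hprev := ih (by omega)
        have hbd : ∀ z ∈ bdryW w Ω, (lapW w)^[K - (i+1)] u z = 0 := by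
          intro z hz
          have h2lt : 2 * (K - (i+1)) < m := by omega
          have := hu.2 z hz (2 * (K - (i+1))) h2lt
          rwa [gradmW_even_idx, abs_eq_zero] at this
        have hharm : ∀ z ∈ Ω, lapW w ((lapW w)^[K - (i+1)] u) z = 0 := by
          intro z hz
          have := hprev z hz
          rwa [show K - i = (K - (i+1)) + 1 by omega, Function.iterate_succ_apply'] at this
        exact mp_zero hlf hnn hψ hΩf hne ho hconn _ hbd hharm x hx
  intro z
  by_cases hz : z ∈ Ω
  · have := DOWN K le_rfl z hz
    simpa using this
  · exact hu.1 z hz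

lemma W0_const (hsymm : ∀ x y, w x y = w y x) (hnn : ∀ x y, 0 ≤ w x y) (hlf : LocFinW w)
    (hψ : ∀ x, 0 < psiW w x) (hconn : ConnW w) (hfin : (Set.univ : Set V).Finite)
    {m : ℕ} (hm : 2 ≤ m) {u : V → ℝ} (hg : ∀ x, gradmW w m u x = 0) :
    ∀ x y, u x = u y := by
  obtain ⟨K, hK1, hKstart⟩ : ∃ K : ℕ, 1 ≤ K ∧ ∀ x, (lapW w)^[K] u x = 0 := by
    by_cases hodd : m % 2 = 1
    · refine ⟨(m - 1) / 2, by omega, ?_⟩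
      have hloc : ∀ x y, 0 < w x y →
          (lapW w)^[(m-1)/2] u y = (lapW w)^[(m-1)/2] u x := by
        intro x y hxy
        have h' := hg x
        unfold gradmW at h'
        rw [if_pos hodd] at h'
        exact (gradW_eq_zero_iff hlf hnn hψ _ x).mp h' y hxy
      have hconst := locconst_const hconn _ hloc
      intro x
      have hit : ∀ z : V, lapW w ((lapW w)^[(m-1)/2 - 1] u) z = (lapW w)^[(m-1)/2] u z := by
        intro z
        conv_rhs => rw [show (m-1)/2 = ((m-1)/2 - 1) + 1 by omega]
        rw [Function.iterate_succ_apply']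
      have hcst : ∀ z, lapW w ((lapW w)^[(m-1)/2 - 1] u) z = (lapW w)^[(m-1)/2] u x := by
        intro z
        rw [hit z]
        exact hconst z x
      exact lap_const_zero hsymm hnn hlf hψ hfin x _ _ hcst
    · refine ⟨m / 2, by omega, fun x => ?_⟩
      have h' := hg x
      unfold gradmW at h'
      rw [if_neg hodd] at h'
      exact abs_eq_zero.mp h'
  have DOWN : ∀ i, i ≤ K - 1 → ∀ x, (lapW w)^[K - i] u x = 0 := by
    intro i
    induction i with
    | zero => intro _ x; simpa using hKstart x
    | succ i ih =>
        intro hi x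
        have hharm : ∀ z, lapW w ((lapW w)^[K - (i+1)] u) z = 0 := by
          intro z
          have := ih (by omega) z
          rwa [show K - i = (K - (i+1)) + 1 by omega, Function.iterate_succ_apply'] at this
        have hconst := harm_const hlf hnn hψ hconn hfin _ hharm
        have hit : ∀ z : V, lapW w ((lapW w)^[K - (i+2)] u) z = (lapW w)^[K - (i+1)] u z := by
          intro z
          conv_rhs => rw [show K - (i+1) = (K - (i+2)) + 1 by omega]
          rw [Function.iterate_succ_apply']
        have hcst : ∀ z, lapW w ((lapW w)^[K - (i+2)] u) z = (lapW w)^[K - (i+1)] u x := by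
          intro z
          rw [hit z]
          exact hconst z x
        exact lap_const_zero hsymm hnn hlf hψ hfin x _ _ hcst
  have hfinal : ∀ z, lapW w u z = 0 := by
    intro z
    have := DOWN (K - 1) le_rfl z
    rwa [show K - (K - 1) = 1 by omega, Function.iterate_one] at this
  exact harm_const hlf hnn hψ hconn hfin u hfinal

end MaxPrinciple
section DPos

open Finset Real

variable {V : Type*} {w : V → V → ℝ}

set_option maxHeartbeats 2000000 in
lemma D_pos (hsymm : ∀ x y, w x y = w y x) (hnn : ∀ x y, 0 ≤ w x y) (hlf : LocFinW w)
    (hψ : ∀ x, 0 < psiW w x) (hconn : ConnW w)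
    {Ω : Set V} (hΩ : Ω.Finite) (hint : (intrW w Ω).Nonempty)
    {p : ℝ} (hp : 1 < p) {m : ℕ} (hm : 2 ≤ m) (a : V → ℝ)
    (hSa : ∃ u₁ ∈ W0 w Ω m, 0 < ∑ x ∈ hΩ.toFinset, psiW w x * (a x * |u₁ x| ^ p))
    {lam1 : ℝ}
    (hlam1 : lam1 = sInf { r : ℝ | ∃ u ∈ W0 w Ω m,
      0 < ∑ x ∈ hΩ.toFinset, psiW w x * (a x * |u x| ^ p) ∧
      r = (∑ x ∈ hΩ.toFinset, psiW w x * gradmW w m u x ^ p) /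
          (∑ x ∈ hΩ.toFinset, psiW w x * (a x * |u x| ^ p)) })
    (hlam1pos : 0 < lam1)
    {lam : ℝ} (hl0 : 0 < lam) (hl1 : lam < lam1)
    {u : V → ℝ} (hu : u ∈ W0 w Ω m) (hune : ∃ z, u z ≠ 0) :
    0 < (∑ x ∈ hΩ.toFinset, psiW w x * gradmW w m u x ^ p)
        - lam * ∑ x ∈ hΩ.toFinset, psiW w x * (a x * |u x| ^ p) := by
  classical
  set A := ∑ x ∈ hΩ.toFinset, psiW w x * gradmW w m u x ^ p with hAdef
  set aa := ∑ x ∈ hΩ.toFinset, psiW w x * (a x * |u x| ^ p) with haadef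
  have hA0 : 0 ≤ A :=
    Finset.sum_nonneg fun x _ =>
      mul_nonneg (hψ x).le (Real.rpow_nonneg (gradmW_nonneg m u x) p)
  have hBdd : BddBelow { r : ℝ | ∃ u ∈ W0 w Ω m,
      0 < ∑ x ∈ hΩ.toFinset, psiW w x * (a x * |u x| ^ p) ∧
      r = (∑ x ∈ hΩ.toFinset, psiW w x * gradmW w m u x ^ p) /
          (∑ x ∈ hΩ.toFinset, psiW w x * (a x * |u x| ^ p)) } := by
    refine ⟨0, ?_⟩
    rintro r ⟨u', _, hpos, rfl⟩
    refine div_nonneg ?_ hpos.le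
    exact Finset.sum_nonneg fun x _ =>
      mul_nonneg (hψ x).le (Real.rpow_nonneg (gradmW_nonneg m u' x) p)
  by_cases haa : 0 < aa
  · have hmem : A / aa ∈ { r : ℝ | ∃ u ∈ W0 w Ω m,
        0 < ∑ x ∈ hΩ.toFinset, psiW w x * (a x * |u x| ^ p) ∧
        r = (∑ x ∈ hΩ.toFinset, psiW w x * gradmW w m u x ^ p) /
            (∑ x ∈ hΩ.toFinset, psiW w x * (a x * |u x| ^ p)) } := ⟨u, hu, haa, rfl⟩
    have hle : lam1 ≤ A / aa := hlam1 ▸ csInf_le hBdd hmem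
    have : lam1 * aa ≤ A := (le_div_iff₀ haa).mp hle
    nlinarith
  · push_neg at haa
    have hD : 0 ≤ A - lam * aa := by nlinarith
    rcases eq_or_lt_of_le hD with hzero | hlt
    swap
    · exact hlt
    exfalso
    have hAz : A = 0 ∧ aa = 0 := by
      constructor <;> nlinarith
    have hgz : ∀ x ∈ Ω, gradmW w m u x = 0 := by
      intro x hx
      have hterm : ∀ x' ∈ hΩ.toFinset, 0 ≤ psiW w x' * gradmW w m u x' ^ p := fun x' _ =>
        mul_nonneg (hψ x').le (Real.rpow_nonneg (gradmW_nonneg m u x') p)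
      have h0 := (Finset.sum_eq_zero_iff_of_nonneg hterm).mp hAz.1 x
        ((Set.Finite.mem_toFinset hΩ).mpr hx)
      rcases mul_eq_zero.mp h0 with h' | h'
      · exact absurd h' (hψ x).ne'
      · by_contra hne'
        have hgpos : 0 < gradmW w m u x :=
          lt_of_le_of_ne (gradmW_nonneg m u x) (Ne.symm hne')
        exact (Real.rpow_pos_of_pos hgpos p).ne' h'
    by_cases hex : ∀ z : V, z ∈ Ω
    · -- V = Ω
      have hfin : (Set.univ : Set V).Finite :=
        Set.Finite.subset hΩ (fun z _ => hex z)
      have hconst := W0_const hsymm hnn hlf hψ hconn hfin hm (fun x => hgz x (hex x))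
      obtain ⟨z₀, hz₀⟩ := hune
      have hcval : ∀ z, u z = u z₀ := fun z => hconst z z₀
      have habsp : (0:ℝ) < |u z₀| ^ p := Real.rpow_pos_of_pos (abs_pos.mpr hz₀) p
      have hSa0 : ∑ x ∈ hΩ.toFinset, psiW w x * a x = 0 := by
        have heq : aa = |u z₀| ^ p * ∑ x ∈ hΩ.toFinset, psiW w x * a x := by
          rw [Finset.mul_sum]
          refine Finset.sum_congr rfl fun x _ => by rw [hcval x]; ring
        rw [hAz.2] at heq
        rcases mul_eq_zero.mp heq.symm with h' | h'
        · exact absurd h' habsp.ne'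
        · exact h'
      obtain ⟨u₁, _, hSapos⟩ := hSa
      obtain ⟨x₀, hx₀F, hx₀⟩ := Finset.exists_ne_zero_of_sum_ne_zero hSapos.ne'
      have hax₀ : a x₀ ≠ 0 := by
        intro h
        apply hx₀
        rw [h]; ring
      set σ : ℝ := if 0 < a x₀ then 1 else -1 with hσdef
      set c₀ : ℝ := psiW w x₀ * a x₀ with hc₀def
      have hcσ : 0 < c₀ * σ := by
        by_cases h : 0 < a x₀
        · rw [hσdef, if_pos h, mul_one]
          exact mul_pos (hψ x₀) h
        · rw [hσdef, if_neg h]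
          have : a x₀ < 0 := lt_of_le_of_ne (not_lt.mp h) hax₀
          nlinarith [hψ x₀]
      set φ₀ : V → ℝ := fun z => if z = x₀ then σ else 0 with hφ₀def
      have hbdry : ∀ z, z ∉ bdryW w Ω := by
        rintro z ⟨_, y, hy, _⟩
        exact hy (hex y)
      have hW0all : ∀ f : V → ℝ, f ∈ W0 w Ω m := fun f =>
        ⟨fun x hx => absurd (hex x) hx, fun x hx => absurd hx (hbdry x)⟩
      set A₀ := ∑ x ∈ hΩ.toFinset, psiW w x * gradmW w m φ₀ x ^ p with hA₀def
      have hA₀nn : 0 ≤ A₀ := Finset.sum_nonneg fun x _ =>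
        mul_nonneg (hψ x).le (Real.rpow_nonneg (gradmW_nonneg m φ₀ x) p)
      have key : ∀ ε : ℝ, 0 < ε → ε < 1 → lam1 ≤ ε ^ (p - 1) * (A₀ / (c₀ * σ)) := by
        intro ε hε hε1
        set uε : V → ℝ := fun z => 1 + ε * φ₀ z with huεdef
        have hgradε : ∀ x, gradmW w m uε x = ε * gradmW w m φ₀ x := by
          intro x
          have h1 : uε = fun z => 1 + (ε • φ₀) z := by
            funext z; simp [huεdef, smul_eq_mul]
          rw [h1, gradmW_const_add hm, gradmW_smul hlf hnn, abs_of_pos hε]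
        have hAε : ∑ x ∈ hΩ.toFinset, psiW w x * gradmW w m uε x ^ p = ε ^ p * A₀ := by
          rw [hA₀def, Finset.mul_sum]
          refine Finset.sum_congr rfl fun x _ => ?_
          rw [hgradε x, Real.mul_rpow hε.le (gradmW_nonneg m φ₀ x)]
          ring
        have haε : ∑ x ∈ hΩ.toFinset, psiW w x * (a x * |uε x| ^ p)
            = c₀ * (|1 + ε * σ| ^ p - 1) := by
          rw [← Finset.add_sum_erase _ _ hx₀F]
          have h1 : ∀ x ∈ hΩ.toFinset.erase x₀,
              psiW w x * (a x * |uε x| ^ p) = psiW w x * a x := by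
            intro x hx
            have hxne := Finset.ne_of_mem_erase hx
            have hux : uε x = 1 := by simp [huεdef, hφ₀def, hxne]
            rw [hux]
            norm_num
          rw [Finset.sum_congr rfl h1]
          have h2 : ∑ x ∈ hΩ.toFinset.erase x₀, psiW w x * a x = - c₀ := by
            have h3 := hSa0
            rw [← Finset.add_sum_erase _ _ hx₀F] at h3
            rw [hc₀def]; linarith
          have h4 : uε x₀ = 1 + ε * σ := by simp [huεdef, hφ₀def]
          rw [h2, h4, hc₀def]
          ring
        have hlow : c₀ * σ * ε ≤ c₀ * (|1 + ε * σ| ^ p - 1) := by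
          by_cases h : 0 < a x₀
          · have hσ1 : σ = 1 := by rw [hσdef, if_pos h]
            have hc₀pos : 0 < c₀ := mul_pos (hψ x₀) h
            rw [hσ1]
            have habs : |1 + ε * 1| = 1 + ε := by
              rw [abs_of_pos (by nlinarith)]; ring
            rw [habs]
            have hbern : 1 + p * ε ≤ (1 + ε) ^ p :=
              one_add_mul_self_le_rpow_one_add (by linarith) hp.le
            have hpe : 0 ≤ (p - 1) * ε := mul_nonneg (by linarith) hε.le
            have h6 : ε ≤ (1 + ε) ^ p - 1 := by linarith
            have h7 := mul_le_mul_of_nonneg_left h6 hc₀pos.le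
            linarith
          · have hσ1 : σ = -1 := by rw [hσdef, if_neg h]
            have hc₀neg : c₀ < 0 := by
              have : a x₀ < 0 := lt_of_le_of_ne (not_lt.mp h) hax₀
              have := hψ x₀
              rw [hc₀def]; nlinarith
            rw [hσ1]
            have habs : |1 + ε * (-1)| = 1 - ε := by
              rw [abs_of_pos (by nlinarith)]; ring
            rw [habs]
            have hle1 : (1 - ε) ^ p ≤ 1 - ε := by
              have := Real.rpow_le_rpow_of_exponent_ge (by linarith : (0:ℝ) < 1 - ε)
                (by linarith : (1:ℝ) - ε ≤ 1) hp.le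
              rwa [Real.rpow_one] at this
            have h7 : (1 - ε) ^ p - 1 ≤ -ε := by linarith
            have h8 := mul_le_mul_of_nonpos_left h7 hc₀neg.le
            linarith
        have haεpos : 0 < ∑ x ∈ hΩ.toFinset, psiW w x * (a x * |uε x| ^ p) := by
          rw [haε]
          have h9 := mul_pos hcσ hε
          linarith
        have hmem : (∑ x ∈ hΩ.toFinset, psiW w x * gradmW w m uε x ^ p) /
            (∑ x ∈ hΩ.toFinset, psiW w x * (a x * |uε x| ^ p)) ∈
            { r : ℝ | ∃ u ∈ W0 w Ω m,
              0 < ∑ x ∈ hΩ.toFinset, psiW w x * (a x * |u x| ^ p) ∧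
              r = (∑ x ∈ hΩ.toFinset, psiW w x * gradmW w m u x ^ p) /
                  (∑ x ∈ hΩ.toFinset, psiW w x * (a x * |u x| ^ p)) } :=
          ⟨uε, hW0all uε, haεpos, rfl⟩
        have hle := hlam1 ▸ csInf_le hBdd hmem
        have hratio : (∑ x ∈ hΩ.toFinset, psiW w x * gradmW w m uε x ^ p) /
            (∑ x ∈ hΩ.toFinset, psiW w x * (a x * |uε x| ^ p))
            ≤ ε ^ (p - 1) * (A₀ / (c₀ * σ)) := by
          rw [hAε, haε]
          have h5 : ε ^ p * A₀ / (c₀ * (|1 + ε * σ| ^ p - 1)) ≤ ε ^ p * A₀ / (c₀ * σ * ε) :=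
            div_le_div_of_nonneg_left (by positivity) (by positivity) hlow
          refine le_trans h5 (le_of_eq ?_)
          rw [show ε ^ p = ε ^ (p - 1) * ε by
            rw [← Real.rpow_add_one hε.ne' (p - 1)]
            norm_num]
          have hne1 : ε ≠ 0 := hε.ne'
          have hne2 : c₀ * σ ≠ 0 := hcσ.ne'
          field_simp
        exact le_trans hle hratio
      set B₀ := A₀ / (c₀ * σ) with hB₀def
      have hB₀nn : 0 ≤ B₀ := div_nonneg hA₀nn hcσ.le
      rcases eq_or_lt_of_le hB₀nn with hB | hB
      · have hk := key (1/2) (by norm_num) (by norm_num)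
        rw [← hB, mul_zero] at hk
        linarith
      · set ε₀ := min (1/2) ((lam1 / (2 * B₀)) ^ (1/(p-1))) with hε₀def
        have hquotpos : 0 < lam1 / (2 * B₀) := div_pos hlam1pos (by linarith)
        have hε₀pos : 0 < ε₀ :=
          lt_min (by norm_num) (Real.rpow_pos_of_pos hquotpos _)
        have hε₀1 : ε₀ < 1 := lt_of_le_of_lt (min_le_left _ _) (by norm_num)
        have h1 := key ε₀ hε₀pos hε₀1
        have h2 : ε₀ ^ (p - 1) ≤ lam1 / (2 * B₀) := by
          calc ε₀ ^ (p - 1) ≤ ((lam1 / (2 * B₀)) ^ (1/(p-1))) ^ (p - 1) :=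
                Real.rpow_le_rpow hε₀pos.le (min_le_right _ _) (by linarith)
            _ = lam1 / (2 * B₀) := by
                rw [← Real.rpow_mul hquotpos.le, one_div_mul_cancel
                  (by linarith : p - 1 ≠ 0), Real.rpow_one]
        have h3 : lam1 ≤ (lam1 / (2 * B₀)) * B₀ :=
          le_trans h1 (mul_le_mul_of_nonneg_right h2 hB.le)
        have hBne : B₀ ≠ 0 := hB.ne'
        have h4 : (lam1 / (2 * B₀)) * B₀ = lam1 / 2 := by
          field_simp
        rw [h4] at h3
        linarith
    · push_neg at hex
      obtain ⟨o, ho⟩ := hex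
      have hne : Ω.Nonempty := by
        obtain ⟨z, hz⟩ := hint
        exact ⟨z, hz.1⟩
      have hvan := W0_vanish hlf hnn hψ hconn hΩ hne ho (by omega : 1 ≤ m) hu hgz
      obtain ⟨z₀, hz₀⟩ := hune
      exact hz₀ (hvan z₀)

end DPos
section MoreBasics

variable {V : Type*} {w : V → V → ℝ}

lemma gradmW_zero_idx (u : V → ℝ) (x : V) : gradmW w 0 u x = |u x| := by
  simp [gradmW]

lemma BformW_zero_idx (u φ : V → ℝ) (x : V) : BformW w 0 u φ x = u x * φ x := by
  simp [BformW]

lemma gammaW_smul_left (c : ℝ) (g h : V → ℝ) (x : V) :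
    gammaW w (c • g) h x = c * gammaW w g h x := by
  unfold gammaW
  rw [show (fun y => w x y * ((c • g) y - (c • g) x) * (h y - h x))
      = fun y => c * (w x y * (g y - g x) * (h y - h x)) by
    funext y; simp only [Pi.smul_apply, smul_eq_mul]; ring]
  rw [tsum_mul_left]
  ring

lemma BformW_smul_left (hlf : LocFinW w) (hnn : ∀ x y, 0 ≤ w x y) (m : ℕ) (c : ℝ)
    (u φ : V → ℝ) (x : V) : BformW w m (c • u) φ x = c * BformW w m u φ x := by
  unfold BformW
  by_cases hodd : m % 2 = 1
  · rw [if_pos hodd, if_pos hodd, lapW_iter_smul hlf hnn, gammaW_smul_left]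
  · rw [if_neg hodd, if_neg hodd, lapW_iter_smul hlf hnn]
    simp only [Pi.smul_apply, smul_eq_mul]
    ring

end MoreBasics
set_option maxHeartbeats 10000000 in
/-- existence of a nontrivial weak solution to a poly-Laplacian eigenvalue-type
system on a bounded domain. -/
theorem poly_laplacian_system_on_domain {V : Type*} [Countable V] (w : V → V → ℝ)
    (hsymm : ∀ x y, w x y = w y x) (hnn : ∀ x y, 0 ≤ w x y)
    (hlf : LocFinW w) (hψ : ∀ x, 0 < psiW w x) (hconn : ConnW w)
    (Ω : Set V) (hΩ : Ω.Finite) (hint : (intrW w Ω).Nonempty)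
    (p q α β : ℝ) (hp : 1 < p) (hq : 1 < q)
    (hα : p < α + 1) (hβ : q < β + 1)
    (m n : ℕ) (hm : 2 ≤ m) (hn : 2 ≤ n)
    (a b : V → ℝ)
    (hSa : ∃ u ∈ W0 w Ω m, 0 < ∑ x ∈ hΩ.toFinset, psiW w x * (a x * |u x| ^ p))
    (lam1 : ℝ)
    (hlam1 : lam1 = sInf { r : ℝ | ∃ u ∈ W0 w Ω m,
      0 < ∑ x ∈ hΩ.toFinset, psiW w x * (a x * |u x| ^ p) ∧
      r = (∑ x ∈ hΩ.toFinset, psiW w x * gradmW w m u x ^ p) /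
          (∑ x ∈ hΩ.toFinset, psiW w x * (a x * |u x| ^ p)) })
    (hlam1pos : 0 < lam1)
    (vth1 : ℝ)
    (hvth1 : vth1 = sInf { r : ℝ | ∃ v ∈ W0 w Ω n,
      0 < ∑ x ∈ hΩ.toFinset, psiW w x * (b x * |v x| ^ q) ∧
      r = (∑ x ∈ hΩ.toFinset, psiW w x * gradmW w n v x ^ q) /
          (∑ x ∈ hΩ.toFinset, psiW w x * (b x * |v x| ^ q)) })
    (hvth1pos : 0 < vth1)
    (lam vth : ℝ) (hlam : 0 < lam ∧ lam < lam1) (hvth : 0 < vth ∧ vth < vth1) :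
    ∃ u v : V → ℝ, u ∈ W0 w Ω m ∧ v ∈ W0 w Ω n ∧ ¬(u = 0 ∧ v = 0) ∧
      (∀ φ ∈ W0 w Ω m,
        ∑ x ∈ hΩ.toFinset, psiW w x * (gradmW w m u x ^ (p - 2) * BformW w m u φ x)
          = lam * ∑ x ∈ hΩ.toFinset, psiW w x * (a x * (|u x| ^ (p - 2) * u x * φ x))
            + (α + 1) / (α + β + 2) *
              ∑ x ∈ hΩ.toFinset,
                psiW w x * (|u x| ^ (α - 1) * u x * |v x| ^ (β + 1) * φ x)) ∧
      (∀ φ' ∈ W0 w Ω n,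
        ∑ x ∈ hΩ.toFinset, psiW w x * (gradmW w n v x ^ (q - 2) * BformW w n v φ' x)
          = vth * ∑ x ∈ hΩ.toFinset, psiW w x * (b x * (|v x| ^ (q - 2) * v x * φ' x))
            + (β + 1) / (α + β + 2) *
              ∑ x ∈ hΩ.toFinset,
                psiW w x * (|u x| ^ (α + 1) * |v x| ^ (β - 1) * v x * φ' x)) := by
  classical
  obtain ⟨hlam0, hlamlt⟩ := hlam
  obtain ⟨hvth0, hvthlt⟩ := hvth
  -- the `b`-set is nonempty (else `vth1 = sInf ∅ = 0`)
  have hSb : ∃ v₁ ∈ W0 w Ω n, 0 < ∑ x ∈ hΩ.toFinset, psiW w x * (b x * |v₁ x| ^ q) := by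
    by_contra hempty
    push_neg at hempty
    have hset : { r : ℝ | ∃ v ∈ W0 w Ω n,
        0 < ∑ x ∈ hΩ.toFinset, psiW w x * (b x * |v x| ^ q) ∧
        r = (∑ x ∈ hΩ.toFinset, psiW w x * gradmW w n v x ^ q) /
            (∑ x ∈ hΩ.toFinset, psiW w x * (b x * |v x| ^ q)) } = ∅ := by
      ext r
      simp only [Set.mem_setOf_eq, Set.mem_empty_iff_false, iff_false]
      rintro ⟨v, hv, hpos, _⟩
      exact absurd hpos (not_lt.mpr (hempty v hv))
    rw [hvth1, hset, Real.sInf_empty] at hvth1pos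
    exact lt_irrefl 0 hvth1pos
  -- coordinates
  let exB : ({x : V // x ∈ hΩ.toFinset} → ℝ) → (V → ℝ) :=
    fun y z => if h : z ∈ hΩ.toFinset then y ⟨z, h⟩ else 0
  have exB_add : ∀ y₁ y₂, exB (y₁ + y₂) = exB y₁ + exB y₂ := by
    intro y₁ y₂; funext z
    by_cases h : z ∈ Ω <;> simp [exB, Set.Finite.mem_toFinset, h]
  have exB_smul : ∀ (c : ℝ) y, exB (c • y) = c • exB y := by
    intro c y; funext z
    by_cases h : z ∈ Ω <;> simp [exB, Set.Finite.mem_toFinset, h]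
  have exB_zero : exB 0 = 0 := by
    funext z; by_cases h : z ∈ Ω <;> simp [exB, Set.Finite.mem_toFinset, h]
  have exB_restr : ∀ f : V → ℝ, (∀ z, z ∉ Ω → f z = 0) → exB (fun i => f i.1) = f := by
    intro f hf; funext z
    by_cases h : z ∈ Ω
    · simp [exB, Set.Finite.mem_toFinset, h]
    · simp only [exB, Set.Finite.mem_toFinset, dif_neg h]
      exact (hf z h).symm
  have exB_ne : ∀ y, y ≠ 0 → ∃ z, exB y z ≠ 0 := by
    intro y hy
    by_contra hall
    push_neg at hall
    apply hy
    funext i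
    have h2 := hall i.1
    have h3 : (i : V) ∈ Ω := (Set.Finite.mem_toFinset hΩ).mp i.2
    simpa [exB, Set.Finite.mem_toFinset, h3] using h2
  -- the two finite-dimensional spaces
  let S1 : Submodule ℝ ({x : V // x ∈ hΩ.toFinset} → ℝ) :=
    { carrier := {y | exB y ∈ W0 w Ω m}
      add_mem' := fun h1 h2 => by
        simp only [Set.mem_setOf_eq] at *
        rw [exB_add]; exact W0_add hlf hnn hψ h1 h2
      zero_mem' := by
        simp only [Set.mem_setOf_eq]
        rw [exB_zero]; exact W0_zero hlf hnn Ω m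
      smul_mem' := fun c y h => by
        simp only [Set.mem_setOf_eq] at *
        rw [exB_smul]; exact W0_smul hlf hnn c h }
  let S2 : Submodule ℝ ({x : V // x ∈ hΩ.toFinset} → ℝ) :=
    { carrier := {y | exB y ∈ W0 w Ω n}
      add_mem' := fun h1 h2 => by
        simp only [Set.mem_setOf_eq] at *
        rw [exB_add]; exact W0_add hlf hnn hψ h1 h2
      zero_mem' := by
        simp only [Set.mem_setOf_eq]
        rw [exB_zero]; exact W0_zero hlf hnn Ω n
      smul_mem' := fun c y h => by
        simp only [Set.mem_setOf_eq] at *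
        rw [exB_smul]; exact W0_smul hlf hnn c h }
  let U1 : ↥S1 → (V → ℝ) := fun y => exB y.1
  let U2 : ↥S2 → (V → ℝ) := fun y => exB y.1
  have hU1W0 : ∀ y : ↥S1, U1 y ∈ W0 w Ω m := fun y => y.2
  have hU2W0 : ∀ y : ↥S2, U2 y ∈ W0 w Ω n := fun y => y.2
  have hU1add : ∀ y₁ y₂ : ↥S1, U1 (y₁ + y₂) = U1 y₁ + U1 y₂ := by
    intro y₁ y₂
    show exB ((y₁ + y₂ : ↥S1) : _) = exB y₁.1 + exB y₂.1
    rw [Submodule.coe_add, exB_add]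
  have hU1smul : ∀ (c : ℝ) (y : ↥S1), U1 (c • y) = c • U1 y := by
    intro c y
    show exB ((c • y : ↥S1) : _) = c • exB y.1
    rw [Submodule.coe_smul, exB_smul]
  have hU2add : ∀ y₁ y₂ : ↥S2, U2 (y₁ + y₂) = U2 y₁ + U2 y₂ := by
    intro y₁ y₂
    show exB ((y₁ + y₂ : ↥S2) : _) = exB y₁.1 + exB y₂.1
    rw [Submodule.coe_add, exB_add]
  have hU2smul : ∀ (c : ℝ) (y : ↥S2), U2 (c • y) = c • U2 y := by
    intro c y
    show exB ((c • y : ↥S2) : _) = c • exB y.1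
    rw [Submodule.coe_smul, exB_smul]
  have hU1ne : ∀ y : ↥S1, y ≠ 0 → ∃ z, U1 y z ≠ 0 := by
    intro y hy
    exact exB_ne y.1 (fun h => hy (Subtype.ext h))
  have hU2ne : ∀ y : ↥S2, y ≠ 0 → ∃ z, U2 y z ≠ 0 := by
    intro y hy
    exact exB_ne y.1 (fun h => hy (Subtype.ext h))
  -- positivity of the quadratic-like parts
  have hD1pos : ∀ y : ↥S1, y ≠ 0 →
      0 < (∑ x ∈ hΩ.toFinset, psiW w x * gradmW w m (U1 y) x ^ p)
          - lam * ∑ x ∈ hΩ.toFinset, psiW w x * (a x * |U1 y x| ^ p) := by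
    intro y hy
    exact D_pos hsymm hnn hlf hψ hconn hΩ hint hp hm a hSa hlam1 hlam1pos hlam0 hlamlt
      (hU1W0 y) (hU1ne y hy)
  have hD2pos : ∀ y : ↥S2, y ≠ 0 →
      0 < (∑ x ∈ hΩ.toFinset, psiW w x * gradmW w n (U2 y) x ^ q)
          - vth * ∑ x ∈ hΩ.toFinset, psiW w x * (b x * |U2 y x| ^ q) := by
    intro y hy
    exact D_pos hsymm hnn hlf hψ hconn hΩ hint hq hn b hSb hvth1 hvth1pos hvth0 hvthlt
      (hU2W0 y) (hU2ne y hy)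
  -- derivative data
  have hDA : ∀ y₀ : ↥S1, ∃ D : ↥S1 →L[ℝ] ℝ,
      HasFDerivAt (fun y => ∑ x ∈ hΩ.toFinset, psiW w x * gradmW w m (U1 y) x ^ p) D y₀ ∧
      ∀ η, D η = ∑ x ∈ hΩ.toFinset, psiW w x *
        (p * (gradmW w m (U1 y₀) x ^ (p - 2) * BformW w m (U1 y₀) (U1 η) x)) :=
    fun y₀ => gradm_sum_hasFDerivAt hlf hnn hψ U1 hU1add hU1smul m hΩ.toFinset
      (fun x => psiW w x) p hp y₀
  have hDB : ∀ y₀ : ↥S2, ∃ D : ↥S2 →L[ℝ] ℝ,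
      HasFDerivAt (fun y => ∑ x ∈ hΩ.toFinset, psiW w x * gradmW w n (U2 y) x ^ q) D y₀ ∧
      ∀ η, D η = ∑ x ∈ hΩ.toFinset, psiW w x *
        (q * (gradmW w n (U2 y₀) x ^ (q - 2) * BformW w n (U2 y₀) (U2 η) x)) :=
    fun y₀ => gradm_sum_hasFDerivAt hlf hnn hψ U2 hU2add hU2smul n hΩ.toFinset
      (fun x => psiW w x) q hq y₀
  have haFshape : (fun y : ↥S1 => ∑ x ∈ hΩ.toFinset, psiW w x * (a x * |U1 y x| ^ p))
      = fun y => ∑ x ∈ hΩ.toFinset, (psiW w x * a x) * gradmW w 0 (U1 y) x ^ p := by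
    funext y
    refine Finset.sum_congr rfl fun x _ => ?_
    rw [gradmW_zero_idx]
    ring
  have hDa : ∀ y₀ : ↥S1, ∃ D : ↥S1 →L[ℝ] ℝ,
      HasFDerivAt (fun y : ↥S1 =>
        ∑ x ∈ hΩ.toFinset, psiW w x * (a x * |U1 y x| ^ p)) D y₀ ∧
      ∀ η, D η = p * ∑ x ∈ hΩ.toFinset, psiW w x *
        (a x * (|U1 y₀ x| ^ (p - 2) * U1 y₀ x * U1 η x)) := by
    intro y₀
    obtain ⟨D, hD, hval⟩ := gradm_sum_hasFDerivAt hlf hnn hψ U1 hU1add hU1smul 0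
      hΩ.toFinset (fun x => psiW w x * a x) p hp y₀
    refine ⟨D, by rw [haFshape]; exact hD, fun η => ?_⟩
    rw [hval η, Finset.mul_sum]
    refine Finset.sum_congr rfl fun x _ => ?_
    rw [gradmW_zero_idx, BformW_zero_idx]
    ring
  have hbFshape : (fun y : ↥S2 => ∑ x ∈ hΩ.toFinset, psiW w x * (b x * |U2 y x| ^ q))
      = fun y => ∑ x ∈ hΩ.toFinset, (psiW w x * b x) * gradmW w 0 (U2 y) x ^ q := by
    funext y
    refine Finset.sum_congr rfl fun x _ => ?_
    rw [gradmW_zero_idx]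
    ring
  have hDb : ∀ y₀ : ↥S2, ∃ D : ↥S2 →L[ℝ] ℝ,
      HasFDerivAt (fun y : ↥S2 =>
        ∑ x ∈ hΩ.toFinset, psiW w x * (b x * |U2 y x| ^ q)) D y₀ ∧
      ∀ η, D η = q * ∑ x ∈ hΩ.toFinset, psiW w x *
        (b x * (|U2 y₀ x| ^ (q - 2) * U2 y₀ x * U2 η x)) := by
    intro y₀
    obtain ⟨D, hD, hval⟩ := gradm_sum_hasFDerivAt hlf hnn hψ U2 hU2add hU2smul 0
      hΩ.toFinset (fun x => psiW w x * b x) q hq y₀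
    refine ⟨D, by rw [hbFshape]; exact hD, fun η => ?_⟩
    rw [hval η, Finset.mul_sum]
    refine Finset.sum_congr rfl fun x _ => ?_
    rw [gradmW_zero_idx, BformW_zero_idx]
    ring
  have hDN : ∀ z₀ : ↥S1 × ↥S2, ∃ D : (↥S1 × ↥S2) →L[ℝ] ℝ,
      HasFDerivAt (fun z : ↥S1 × ↥S2 => ∑ x ∈ hΩ.toFinset,
        psiW w x * (|U1 z.1 x| ^ (α + 1) * |U2 z.2 x| ^ (β + 1))) D z₀ ∧
      (∀ η : ↥S1, D (η, 0) = ∑ x ∈ hΩ.toFinset, psiW w x *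
        (((α + 1) * (|U1 z₀.1 x| ^ (α + 1 - 2) * (U1 z₀.1 x * U1 η x))) *
          |U2 z₀.2 x| ^ (β + 1))) ∧
      (∀ η : ↥S2, D (0, η) = ∑ x ∈ hΩ.toFinset, psiW w x *
        (|U1 z₀.1 x| ^ (α + 1) *
          ((β + 1) * (|U2 z₀.2 x| ^ (β + 1 - 2) * (U2 z₀.2 x * U2 η x))))) :=
    fun z₀ => coupling_hasFDerivAt U1 hU1add hU1smul U2 hU2add hU2smul hΩ.toFinset
      (fun x => psiW w x) (α + 1) (β + 1) (by linarith) (by linarith) z₀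
  -- continuity
  have hAfcont : Continuous (fun y : ↥S1 =>
      ∑ x ∈ hΩ.toFinset, psiW w x * gradmW w m (U1 y) x ^ p) :=
    continuous_iff_continuousAt.mpr fun y₀ => ((hDA y₀).choose_spec.1).continuousAt
  have haFcont : Continuous (fun y : ↥S1 =>
      ∑ x ∈ hΩ.toFinset, psiW w x * (a x * |U1 y x| ^ p)) :=
    continuous_iff_continuousAt.mpr fun y₀ => ((hDa y₀).choose_spec.1).continuousAt
  have hBfcont : Continuous (fun y : ↥S2 =>
      ∑ x ∈ hΩ.toFinset, psiW w x * gradmW w n (U2 y) x ^ q) :=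
    continuous_iff_continuousAt.mpr fun y₀ => ((hDB y₀).choose_spec.1).continuousAt
  have hbFcont : Continuous (fun y : ↥S2 =>
      ∑ x ∈ hΩ.toFinset, psiW w x * (b x * |U2 y x| ^ q)) :=
    continuous_iff_continuousAt.mpr fun y₀ => ((hDb y₀).choose_spec.1).continuousAt
  have hNfcont : Continuous (fun z : ↥S1 × ↥S2 => ∑ x ∈ hΩ.toFinset,
      psiW w x * (|U1 z.1 x| ^ (α + 1) * |U2 z.2 x| ^ (β + 1))) :=
    continuous_iff_continuousAt.mpr fun z₀ => ((hDN z₀).choose_spec.1).continuousAt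
  -- named functionals
  set D1 : ↥S1 → ℝ := fun y =>
    (∑ x ∈ hΩ.toFinset, psiW w x * gradmW w m (U1 y) x ^ p)
      - lam * ∑ x ∈ hΩ.toFinset, psiW w x * (a x * |U1 y x| ^ p) with hD1def
  set D2 : ↥S2 → ℝ := fun y =>
    (∑ x ∈ hΩ.toFinset, psiW w x * gradmW w n (U2 y) x ^ q)
      - vth * ∑ x ∈ hΩ.toFinset, psiW w x * (b x * |U2 y x| ^ q) with hD2def
  set Nf : ↥S1 × ↥S2 → ℝ := fun z => ∑ x ∈ hΩ.toFinset,
    psiW w x * (|U1 z.1 x| ^ (α + 1) * |U2 z.2 x| ^ (β + 1)) with hNfdef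
  have hD1posf : ∀ y : ↥S1, y ≠ 0 → 0 < D1 y := fun y hy => hD1pos y hy
  have hD2posf : ∀ y : ↥S2, y ≠ 0 → 0 < D2 y := fun y hy => hD2pos y hy
  have hD1cont : Continuous D1 := hAfcont.sub (continuous_const.mul haFcont)
  have hD2cont : Continuous D2 := hBfcont.sub (continuous_const.mul hbFcont)
  set sE : ℝ := (α + 1) / p with hsEdef
  set tE : ℝ := (β + 1) / q with htEdef
  set R : ↥S1 × ↥S2 → ℝ := fun z => Nf z * (D1 z.1) ^ (-sE) * (D2 z.2) ^ (-tE) with hRdef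
  -- homogeneity
  have habs1 : ∀ (c : ℝ) (y : ↥S1) (x : V), |U1 (c • y) x| = |c| * |U1 y x| := by
    intro c y x
    rw [hU1smul]
    simp [abs_mul]
  have habs2 : ∀ (c : ℝ) (y : ↥S2) (x : V), |U2 (c • y) x| = |c| * |U2 y x| := by
    intro c y x
    rw [hU2smul]
    simp [abs_mul]
  have hD1hom : ∀ (c : ℝ), 0 < c → ∀ y, D1 (c • y) = c ^ p * D1 y := by
    intro c hc y
    rw [hD1def]
    simp only []
    have hA : (∑ x ∈ hΩ.toFinset, psiW w x * gradmW w m (U1 (c • y)) x ^ p)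
        = c ^ p * ∑ x ∈ hΩ.toFinset, psiW w x * gradmW w m (U1 y) x ^ p := by
      rw [Finset.mul_sum]
      refine Finset.sum_congr rfl fun x _ => ?_
      rw [hU1smul, gradmW_smul hlf hnn, abs_of_pos hc,
        Real.mul_rpow hc.le (gradmW_nonneg _ _ _)]
      ring
    have ha : (∑ x ∈ hΩ.toFinset, psiW w x * (a x * |U1 (c • y) x| ^ p))
        = c ^ p * ∑ x ∈ hΩ.toFinset, psiW w x * (a x * |U1 y x| ^ p) := by
      rw [Finset.mul_sum]
      refine Finset.sum_congr rfl fun x _ => ?_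
      rw [habs1, abs_of_pos hc, Real.mul_rpow hc.le (abs_nonneg _)]
      ring
    rw [hA, ha]
    ring
  have hD2hom : ∀ (c : ℝ), 0 < c → ∀ y, D2 (c • y) = c ^ q * D2 y := by
    intro c hc y
    rw [hD2def]
    simp only []
    have hA : (∑ x ∈ hΩ.toFinset, psiW w x * gradmW w n (U2 (c • y)) x ^ q)
        = c ^ q * ∑ x ∈ hΩ.toFinset, psiW w x * gradmW w n (U2 y) x ^ q := by
      rw [Finset.mul_sum]
      refine Finset.sum_congr rfl fun x _ => ?_
      rw [hU2smul, gradmW_smul hlf hnn, abs_of_pos hc,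
        Real.mul_rpow hc.le (gradmW_nonneg _ _ _)]
      ring
    have hb : (∑ x ∈ hΩ.toFinset, psiW w x * (b x * |U2 (c • y) x| ^ q))
        = c ^ q * ∑ x ∈ hΩ.toFinset, psiW w x * (b x * |U2 y x| ^ q) := by
      rw [Finset.mul_sum]
      refine Finset.sum_congr rfl fun x _ => ?_
      rw [habs2, abs_of_pos hc, Real.mul_rpow hc.le (abs_nonneg _)]
      ring
    rw [hA, hb]
    ring
  have hNfhom : ∀ (c d : ℝ), 0 < c → 0 < d → ∀ (y1 : ↥S1) (y2 : ↥S2),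
      Nf (c • y1, d • y2) = c ^ (α + 1) * d ^ (β + 1) * Nf (y1, y2) := by
    intro c d hc hd y1 y2
    rw [hNfdef]
    simp only []
    rw [Finset.mul_sum]
    refine Finset.sum_congr rfl fun x _ => ?_
    rw [habs1, habs2, abs_of_pos hc, abs_of_pos hd,
      Real.mul_rpow hc.le (abs_nonneg _), Real.mul_rpow hd.le (abs_nonneg _)]
    ring
  have hRinv : ∀ (c d : ℝ), 0 < c → 0 < d → ∀ (y1 : ↥S1) (y2 : ↥S2), y1 ≠ 0 → y2 ≠ 0 →
      R (c • y1, d • y2) = R (y1, y2) := by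
    intro c d hc hd y1 y2 h1 h2
    have hd1 : 0 < D1 y1 := hD1posf y1 h1
    have hd2 : 0 < D2 y2 := hD2posf y2 h2
    rw [hRdef]
    simp only []
    rw [hNfhom c d hc hd, hD1hom c hc, hD2hom d hd,
      Real.mul_rpow (by positivity : (0:ℝ) ≤ c ^ p) hd1.le,
      Real.mul_rpow (by positivity : (0:ℝ) ≤ d ^ q) hd2.le,
      ← Real.rpow_mul hc.le, ← Real.rpow_mul hd.le]
    have hcc : c ^ (α + 1) * c ^ (p * -sE) = 1 := by
      rw [← Real.rpow_add hc, show α + 1 + p * -sE = 0 by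
        rw [hsEdef]; field_simp; ring, Real.rpow_zero]
    have hdd : d ^ (β + 1) * d ^ (q * -tE) = 1 := by
      rw [← Real.rpow_add hd, show β + 1 + q * -tE = 0 by
        rw [htEdef]; field_simp; ring, Real.rpow_zero]
    calc c ^ (α+1) * d ^ (β+1) * Nf (y1, y2) * (c ^ (p * -sE) * D1 y1 ^ (-sE))
          * (d ^ (q * -tE) * D2 y2 ^ (-tE))
        = (c ^ (α+1) * c ^ (p * -sE)) * (d ^ (β+1) * d ^ (q * -tE))
          * (Nf (y1, y2) * D1 y1 ^ (-sE) * D2 y2 ^ (-tE)) := by ring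
      _ = Nf (y1, y2) * D1 y1 ^ (-sE) * D2 y2 ^ (-tE) := by rw [hcc, hdd]; ring
  -- a common nontrivial element
  have hp0 : p ≠ 0 := by linarith
  have hq0 : q ≠ 0 := by linarith
  obtain ⟨f₀, hf₀m, hf₀n, z₀w, hz₀Ω, hz₀ne⟩ :
      ∃ f : V → ℝ, f ∈ W0 w Ω m ∧ f ∈ W0 w Ω n ∧ ∃ z ∈ hΩ.toFinset, f z ≠ 0 := by
    rcases le_total m n with hmn | hmn
    · obtain ⟨v₀, hv₀, hv₀pos⟩ := hSb
      obtain ⟨x₁, hx₁F, hx₁⟩ := Finset.exists_ne_zero_of_sum_ne_zero hv₀pos.ne'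
      refine ⟨v₀, W0_mono hmn hv₀, hv₀, x₁, hx₁F, fun h => hx₁ ?_⟩
      rw [h]
      simp [Real.zero_rpow hq0]
    · obtain ⟨u₀, hu₀, hu₀pos⟩ := hSa
      obtain ⟨x₁, hx₁F, hx₁⟩ := Finset.exists_ne_zero_of_sum_ne_zero hu₀pos.ne'
      refine ⟨u₀, hu₀, W0_mono hmn hu₀, x₁, hx₁F, fun h => hx₁ ?_⟩
      rw [h]
      simp [Real.zero_rpow hp0]
  have hy01mem : (fun i : {x : V // x ∈ hΩ.toFinset} => f₀ i.1) ∈ S1 := by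
    show exB (fun i => f₀ i.1) ∈ W0 w Ω m
    rw [exB_restr f₀ hf₀m.1]
    exact hf₀m
  have hy02mem : (fun i : {x : V // x ∈ hΩ.toFinset} => f₀ i.1) ∈ S2 := by
    show exB (fun i => f₀ i.1) ∈ W0 w Ω n
    rw [exB_restr f₀ hf₀n.1]
    exact hf₀n
  set y01 : ↥S1 := ⟨fun i => f₀ i.1, hy01mem⟩ with hy01def
  set y02 : ↥S2 := ⟨fun i => f₀ i.1, hy02mem⟩ with hy02def
  have hy01U : U1 y01 = f₀ := exB_restr f₀ hf₀m.1
  have hy02U : U2 y02 = f₀ := exB_restr f₀ hf₀n.1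
  have hy01ne : y01 ≠ 0 := by
    intro h
    apply hz₀ne
    have h2 : U1 y01 = 0 := by
      rw [h]
      show exB ((0 : ↥S1) : _) = 0
      rw [Submodule.coe_zero, exB_zero]
    rw [hy01U] at h2
    rw [h2]
    rfl
  have hy02ne : y02 ≠ 0 := by
    intro h
    apply hz₀ne
    have h2 : U2 y02 = 0 := by
      rw [h]
      show exB ((0 : ↥S2) : _) = 0
      rw [Submodule.coe_zero, exB_zero]
    rw [hy02U] at h2
    rw [h2]
    rfl
  have hNfy0pos : 0 < Nf (y01, y02) := by
    rw [hNfdef]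
    refine Finset.sum_pos' (fun x _ => ?_) ⟨z₀w, hz₀Ω, ?_⟩
    · exact mul_nonneg (hψ x).le (mul_nonneg (Real.rpow_nonneg (abs_nonneg _) _)
        (Real.rpow_nonneg (abs_nonneg _) _))
    · show 0 < psiW w z₀w * (|U1 y01 z₀w| ^ (α+1) * |U2 y02 z₀w| ^ (β+1))
      rw [hy01U, hy02U]
      have habs : 0 < |f₀ z₀w| := abs_pos.mpr hz₀ne
      exact mul_pos (hψ z₀w) (mul_pos (Real.rpow_pos_of_pos habs _)
        (Real.rpow_pos_of_pos habs _))
  -- sphere maximum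
  have hn1 : ‖y01‖ ≠ 0 := norm_ne_zero_iff.mpr hy01ne
  have hn2 : ‖y02‖ ≠ 0 := norm_ne_zero_iff.mpr hy02ne
  have hn1pos : 0 < ‖y01‖ := norm_pos_iff.mpr hy01ne
  have hn2pos : 0 < ‖y02‖ := norm_pos_iff.mpr hy02ne
  have hzinitS : ((‖y01‖⁻¹ • y01, ‖y02‖⁻¹ • y02) : ↥S1 × ↥S2)
      ∈ Metric.sphere (0:↥S1) 1 ×ˢ Metric.sphere (0:↥S2) 1 := by
    rw [Set.mem_prod]
    refine ⟨?_, ?_⟩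
    · rw [mem_sphere_zero_iff_norm]
      have hns : ‖‖y01‖⁻¹ • y01‖ = ‖y01‖⁻¹ * ‖y01‖ := by simp [norm_smul]
      rw [hns, inv_mul_cancel₀ hn1]
    · rw [mem_sphere_zero_iff_norm]
      have hns : ‖‖y02‖⁻¹ • y02‖ = ‖y02‖⁻¹ * ‖y02‖ := by simp [norm_smul]
      rw [hns, inv_mul_cancel₀ hn2]
  have hRcontOn : ContinuousOn R (Metric.sphere (0:↥S1) 1 ×ˢ Metric.sphere (0:↥S2) 1) := by
    intro z hz
    rw [Set.mem_prod] at hz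
    have hz1 : z.1 ≠ 0 := by
      intro h
      have := (mem_sphere_zero_iff_norm).mp hz.1
      rw [h, norm_zero] at this
      norm_num at this
    have hz2 : z.2 ≠ 0 := by
      intro h
      have := (mem_sphere_zero_iff_norm).mp hz.2
      rw [h, norm_zero] at this
      norm_num at this
    apply ContinuousAt.continuousWithinAt
    refine ContinuousAt.mul (ContinuousAt.mul ?_ ?_) ?_
    · exact hNfcont.continuousAt
    · exact ((hD1cont.comp continuous_fst).continuousAt).rpow_const
        (Or.inl (hD1posf z.1 hz1).ne')
    · exact ((hD2cont.comp continuous_snd).continuousAt).rpow_const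
        (Or.inl (hD2posf z.2 hz2).ne')
  obtain ⟨zs, hzsS, hzsmax⟩ := (((isCompact_sphere (0:↥S1) 1)).prod
    (isCompact_sphere (0:↥S2) 1)).exists_isMaxOn
    ⟨_, hzinitS⟩ hRcontOn
  have hzs1 : zs.1 ≠ 0 := by
    rw [Set.mem_prod] at hzsS
    intro h
    have := (mem_sphere_zero_iff_norm).mp hzsS.1
    rw [h, norm_zero] at this
    norm_num at this
  have hzs2 : zs.2 ≠ 0 := by
    intro h
    have := (mem_sphere_zero_iff_norm).mp hzsS.2
    rw [h, norm_zero] at this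
    norm_num at this
  have hRinitpos : 0 < R (‖y01‖⁻¹ • y01, ‖y02‖⁻¹ • y02) := by
    rw [hRinv _ _ (inv_pos.mpr hn1pos) (inv_pos.mpr hn2pos) y01 y02 hy01ne hy02ne]
    rw [hRdef]
    have t1 : (0:ℝ) < D1 y01 ^ (-sE) := Real.rpow_pos_of_pos (hD1posf y01 hy01ne) _
    have t2 : (0:ℝ) < D2 y02 ^ (-tE) := Real.rpow_pos_of_pos (hD2posf y02 hy02ne) _
    exact mul_pos (mul_pos hNfy0pos t1) t2
  have hRzs : 0 < R zs := lt_of_lt_of_le hRinitpos (hzsmax hzinitS)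
  have hNzs : 0 < Nf zs := by
    have t1 : (0:ℝ) < D1 zs.1 ^ (-sE) := Real.rpow_pos_of_pos (hD1posf zs.1 hzs1) _
    have t2 : (0:ℝ) < D2 zs.2 ^ (-tE) := Real.rpow_pos_of_pos (hD2posf zs.2 hzs2) _
    have hR2 : 0 < Nf zs * D1 zs.1 ^ (-sE) * D2 zs.2 ^ (-tE) := hRzs
    nlinarith [mul_pos t1 t2]
  -- local maximality
  have hUopen : IsOpen {z : ↥S1 × ↥S2 | z.1 ≠ 0 ∧ z.2 ≠ 0} := by
    have e : {z : ↥S1 × ↥S2 | z.1 ≠ 0 ∧ z.2 ≠ 0}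
        = (Prod.fst ⁻¹' ({0} : Set ↥S1))ᶜ ∩ (Prod.snd ⁻¹' ({0} : Set ↥S2))ᶜ := by
      ext z
      simp [Set.mem_setOf_eq]
    rw [e]
    exact ((isClosed_singleton.preimage continuous_fst).isOpen_compl).inter
      ((isClosed_singleton.preimage continuous_snd).isOpen_compl)
  have hlocmax : IsLocalMax R zs := by
    have hzsU : zs ∈ {z : ↥S1 × ↥S2 | z.1 ≠ 0 ∧ z.2 ≠ 0} := ⟨hzs1, hzs2⟩
    filter_upwards [hUopen.mem_nhds hzsU] with z hz
    have hz1pos : 0 < ‖z.1‖ := norm_pos_iff.mpr hz.1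
    have hz2pos : 0 < ‖z.2‖ := norm_pos_iff.mpr hz.2
    have h1 : ((‖z.1‖⁻¹ • z.1, ‖z.2‖⁻¹ • z.2) : ↥S1 × ↥S2)
        ∈ Metric.sphere (0:↥S1) 1 ×ˢ Metric.sphere (0:↥S2) 1 := by
      rw [Set.mem_prod]
      refine ⟨?_, ?_⟩
      · rw [mem_sphere_zero_iff_norm]
        have hns : ‖‖z.1‖⁻¹ • z.1‖ = ‖z.1‖⁻¹ * ‖z.1‖ := by simp [norm_smul]
        rw [hns, inv_mul_cancel₀ hz1pos.ne']
      · rw [mem_sphere_zero_iff_norm]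
        have hns : ‖‖z.2‖⁻¹ • z.2‖ = ‖z.2‖⁻¹ * ‖z.2‖ := by simp [norm_smul]
        rw [hns, inv_mul_cancel₀ hz2pos.ne']
    have h2 := hzsmax h1
    have h3 := hRinv _ _ (inv_pos.mpr hz1pos) (inv_pos.mpr hz2pos) z.1 z.2 hz.1 hz.2
    have h5 : R (z.1, z.2) = R z := rfl
    have h6 : R ((‖z.1‖⁻¹ • z.1, ‖z.2‖⁻¹ • z.2) : ↥S1 × ↥S2) ≤ R zs := h2
    linarith [h3, h5, h6]
  -- derivative of R at the maximum point
  obtain ⟨DA, hDAd, hDAval⟩ := hDA zs.1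
  obtain ⟨Da, hDad, hDaval⟩ := hDa zs.1
  obtain ⟨DB, hDBd, hDBval⟩ := hDB zs.2
  obtain ⟨Db, hDbd, hDbval⟩ := hDb zs.2
  obtain ⟨DN, hDNd, hDN1, hDN2⟩ := hDN zs
  have hD1s : 0 < D1 zs.1 := hD1posf zs.1 hzs1
  have hD2s : 0 < D2 zs.2 := hD2posf zs.2 hzs2
  set W1 : (↥S1 × ↥S2) →L[ℝ] ℝ :=
    (DA - lam • Da).comp (ContinuousLinearMap.fst ℝ ↥S1 ↥S2) with hW1def
  set W2 : (↥S1 × ↥S2) →L[ℝ] ℝ :=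
    (DB - vth • Db).comp (ContinuousLinearMap.snd ℝ ↥S1 ↥S2) with hW2def
  have hD1F : HasFDerivAt D1 (DA - lam • Da) zs.1 := by
    rw [hD1def]
    exact hDAd.sub (hDad.const_mul lam)
  have hD2F : HasFDerivAt D2 (DB - vth • Db) zs.2 := by
    rw [hD2def]
    exact hDBd.sub (hDbd.const_mul vth)
  have hD1Fp : HasFDerivAt (fun z : ↥S1 × ↥S2 => D1 z.1) W1 zs :=
    hD1F.comp zs hasFDerivAt_fst
  have hD2Fp : HasFDerivAt (fun z : ↥S1 × ↥S2 => D2 z.2) W2 zs :=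
    hD2F.comp zs hasFDerivAt_snd
  have hg1 : HasFDerivAt (fun z : ↥S1 × ↥S2 => (D1 z.1) ^ (-sE))
      ((-sE * (D1 zs.1) ^ (-sE - 1)) • W1) zs :=
    by have := (Real.hasDerivAt_rpow_const (x := D1 zs.1) (p := -sE)
      (Or.inl hD1s.ne')).comp_hasFDerivAt zs hD1Fp; exact this
  have hg2 : HasFDerivAt (fun z : ↥S1 × ↥S2 => (D2 z.2) ^ (-tE))
      ((-tE * (D2 zs.2) ^ (-tE - 1)) • W2) zs :=
    by have := (Real.hasDerivAt_rpow_const (x := D2 zs.2) (p := -tE)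
      (Or.inl hD2s.ne')).comp_hasFDerivAt zs hD2Fp; exact this
  have hRd : HasFDerivAt R
      ((Nf zs * (D1 zs.1) ^ (-sE)) • ((-tE * (D2 zs.2) ^ (-tE - 1)) • W2)
        + (D2 zs.2) ^ (-tE) • (Nf zs • ((-sE * (D1 zs.1) ^ (-sE - 1)) • W1)
            + (D1 zs.1) ^ (-sE) • DN)) zs := (hDNd.mul hg1).mul hg2
  have hzero := hlocmax.hasFDerivAt_eq_zero hRd
  have hK1 : ∀ η : ↥S1,
      (∑ x ∈ hΩ.toFinset, psiW w x *
        (gradmW w m (U1 zs.1) x ^ (p - 2) * BformW w m (U1 zs.1) (U1 η) x))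
      - lam * ∑ x ∈ hΩ.toFinset, psiW w x *
        (a x * (|U1 zs.1 x| ^ (p - 2) * U1 zs.1 x * U1 η x))
      = (D1 zs.1 / Nf zs) * ∑ x ∈ hΩ.toFinset, psiW w x *
        (|U1 zs.1 x| ^ (α - 1) * U1 zs.1 x * |U2 zs.2 x| ^ (β + 1) * U1 η x) := by
    intro η
    have h0 := congrArg (fun (L : (↥S1 × ↥S2) →L[ℝ] ℝ) => L (η, 0)) hzero
    simp only [ContinuousLinearMap.add_apply, ContinuousLinearMap.smul_apply,
      ContinuousLinearMap.zero_apply, smul_eq_mul] at h0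
    have hW2v : W2 ((η, 0) : ↥S1 × ↥S2) = 0 := by
      rw [hW2def]
      simp
    have hW1v : W1 ((η, 0) : ↥S1 × ↥S2) = DA η - lam * Da η := by
      rw [hW1def]
      simp
    rw [hW1v, hW2v] at h0
    set T1 := ∑ x ∈ hΩ.toFinset, psiW w x *
      (gradmW w m (U1 zs.1) x ^ (p - 2) * BformW w m (U1 zs.1) (U1 η) x) with hT1d
    set Ta := ∑ x ∈ hΩ.toFinset, psiW w x *
      (a x * (|U1 zs.1 x| ^ (p - 2) * U1 zs.1 x * U1 η x)) with hTad
    set CS := ∑ x ∈ hΩ.toFinset, psiW w x *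
      (|U1 zs.1 x| ^ (α - 1) * U1 zs.1 x * |U2 zs.2 x| ^ (β + 1) * U1 η x) with hCSd
    have hDAη : DA η = p * T1 := by
      rw [hDAval η, hT1d, Finset.mul_sum]
      exact Finset.sum_congr rfl fun x _ => by ring
    have hDaη : Da η = p * Ta := hDaval η
    have hDNη : DN ((η, 0) : ↥S1 × ↥S2) = (α + 1) * CS := by
      rw [hDN1 η, hCSd, Finset.mul_sum]
      refine Finset.sum_congr rfl fun x _ => ?_
      rw [show α + 1 - 2 = α - 1 by ring]
      ring
    rw [hDAη, hDaη, hDNη] at h0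
    have hg2v : (0:ℝ) < D2 zs.2 ^ (-tE) := Real.rpow_pos_of_pos hD2s _
    have hpow1 : D1 zs.1 ^ (-sE - 1) * D1 zs.1 ^ (sE + 1) = 1 := by
      rw [← Real.rpow_add hD1s, show -sE - 1 + (sE + 1) = 0 by ring, Real.rpow_zero]
    have hpow2 : D1 zs.1 ^ (-sE) * D1 zs.1 ^ (sE + 1) = D1 zs.1 := by
      rw [← Real.rpow_add hD1s, show -sE + (sE + 1) = 1 by ring, Real.rpow_one]
    have hinner : Nf zs * (-sE * D1 zs.1 ^ (-sE - 1) * (p * T1 - lam * (p * Ta)))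
        + D1 zs.1 ^ (-sE) * ((α + 1) * CS) = 0 := by
      have h0' : D2 zs.2 ^ (-tE) * (Nf zs * (-sE * D1 zs.1 ^ (-sE - 1) *
          (p * T1 - lam * (p * Ta))) + D1 zs.1 ^ (-sE) * ((α + 1) * CS)) = 0 := by
        linear_combination h0
      rcases mul_eq_zero.mp h0' with h | h
      · exact absurd h hg2v.ne'
      · exact h
    have hmain : Nf zs * (sE * (p * T1 - lam * (p * Ta))) = D1 zs.1 * ((α + 1) * CS) := by
      linear_combination (-(D1 zs.1 ^ (sE + 1))) * hinner
        + (-(Nf zs * sE * (p * T1 - lam * (p * Ta)))) * hpow1 + ((α + 1) * CS) * hpow2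
    have hsp : sE * p = α + 1 := by
      rw [hsEdef]
      field_simp
    have hα1 : (α:ℝ) + 1 ≠ 0 := by linarith
    have hfin : Nf zs * (T1 - lam * Ta) = D1 zs.1 * CS := by
      have h3 : (α + 1) * (Nf zs * (T1 - lam * Ta)) = (α + 1) * (D1 zs.1 * CS) := by
        linear_combination hmain - Nf zs * (T1 - lam * Ta) * hsp
      exact mul_left_cancel₀ hα1 h3
    have hNs : Nf zs ≠ 0 := hNzs.ne'
    rw [show D1 zs.1 / Nf zs * CS = D1 zs.1 * CS / Nf zs by ring, eq_div_iff hNs]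
    linear_combination hfin
  have hK2 : ∀ η : ↥S2,
      (∑ x ∈ hΩ.toFinset, psiW w x *
        (gradmW w n (U2 zs.2) x ^ (q - 2) * BformW w n (U2 zs.2) (U2 η) x))
      - vth * ∑ x ∈ hΩ.toFinset, psiW w x *
        (b x * (|U2 zs.2 x| ^ (q - 2) * U2 zs.2 x * U2 η x))
      = (D2 zs.2 / Nf zs) * ∑ x ∈ hΩ.toFinset, psiW w x *
        (|U1 zs.1 x| ^ (α + 1) * |U2 zs.2 x| ^ (β - 1) * U2 zs.2 x * U2 η x) := by
    intro η
    have h0 := congrArg (fun (L : (↥S1 × ↥S2) →L[ℝ] ℝ) => L (0, η)) hzero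
    simp only [ContinuousLinearMap.add_apply, ContinuousLinearMap.smul_apply,
      ContinuousLinearMap.zero_apply, smul_eq_mul] at h0
    have hW1v : W1 ((0, η) : ↥S1 × ↥S2) = 0 := by
      rw [hW1def]
      simp
    have hW2v : W2 ((0, η) : ↥S1 × ↥S2) = DB η - vth * Db η := by
      rw [hW2def]
      simp
    rw [hW1v, hW2v] at h0
    set T2 := ∑ x ∈ hΩ.toFinset, psiW w x *
      (gradmW w n (U2 zs.2) x ^ (q - 2) * BformW w n (U2 zs.2) (U2 η) x) with hT2d
    set Tb := ∑ x ∈ hΩ.toFinset, psiW w x *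
      (b x * (|U2 zs.2 x| ^ (q - 2) * U2 zs.2 x * U2 η x)) with hTbd
    set CS := ∑ x ∈ hΩ.toFinset, psiW w x *
      (|U1 zs.1 x| ^ (α + 1) * |U2 zs.2 x| ^ (β - 1) * U2 zs.2 x * U2 η x) with hCSd
    have hDBη : DB η = q * T2 := by
      rw [hDBval η, hT2d, Finset.mul_sum]
      exact Finset.sum_congr rfl fun x _ => by ring
    have hDbη : Db η = q * Tb := hDbval η
    have hDNη : DN ((0, η) : ↥S1 × ↥S2) = (β + 1) * CS := by
      rw [hDN2 η, hCSd, Finset.mul_sum]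
      refine Finset.sum_congr rfl fun x _ => ?_
      rw [show β + 1 - 2 = β - 1 by ring]
      ring
    rw [hDBη, hDbη, hDNη] at h0
    have hg1v : (0:ℝ) < D1 zs.1 ^ (-sE) := Real.rpow_pos_of_pos hD1s _
    have hpow1 : D2 zs.2 ^ (-tE - 1) * D2 zs.2 ^ (tE + 1) = 1 := by
      rw [← Real.rpow_add hD2s, show -tE - 1 + (tE + 1) = 0 by ring, Real.rpow_zero]
    have hpow2 : D2 zs.2 ^ (-tE) * D2 zs.2 ^ (tE + 1) = D2 zs.2 := by
      rw [← Real.rpow_add hD2s, show -tE + (tE + 1) = 1 by ring, Real.rpow_one]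
    have hinner : Nf zs * (-tE * D2 zs.2 ^ (-tE - 1) * (q * T2 - vth * (q * Tb)))
        + D2 zs.2 ^ (-tE) * ((β + 1) * CS) = 0 := by
      have h0' : D1 zs.1 ^ (-sE) * (Nf zs * (-tE * D2 zs.2 ^ (-tE - 1) *
          (q * T2 - vth * (q * Tb))) + D2 zs.2 ^ (-tE) * ((β + 1) * CS)) = 0 := by
        linear_combination h0
      rcases mul_eq_zero.mp h0' with h | h
      · exact absurd h hg1v.ne'
      · exact h
    have hmain : Nf zs * (tE * (q * T2 - vth * (q * Tb))) = D2 zs.2 * ((β + 1) * CS) := by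
      linear_combination (-(D2 zs.2 ^ (tE + 1))) * hinner
        + (-(Nf zs * tE * (q * T2 - vth * (q * Tb)))) * hpow1 + ((β + 1) * CS) * hpow2
    have htq : tE * q = β + 1 := by
      rw [htEdef]
      field_simp
    have hβ1 : (β:ℝ) + 1 ≠ 0 := by linarith
    have hfin : Nf zs * (T2 - vth * Tb) = D2 zs.2 * CS := by
      have h3 : (β + 1) * (Nf zs * (T2 - vth * Tb)) = (β + 1) * (D2 zs.2 * CS) := by
        linear_combination hmain - Nf zs * (T2 - vth * Tb) * htq
      exact mul_left_cancel₀ hβ1 h3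
    have hNs : Nf zs ≠ 0 := hNzs.ne'
    rw [show D2 zs.2 / Nf zs * CS = D2 zs.2 * CS / Nf zs by ring, eq_div_iff hNs]
    linear_combination hfin
  -- solve the scaling system
  set Ddet : ℝ := p * q - (α + 1) * q - (β + 1) * p with hDdetd
  have hDdetne : Ddet ≠ 0 := by
    have h1 : p * q < (α + 1) * q := by nlinarith
    have h2 : 0 < (β + 1) * p := by nlinarith
    rw [hDdetd]
    nlinarith
  set κ1 : ℝ := D1 zs.1 / Nf zs with hκ1d
  set κ2 : ℝ := D2 zs.2 / Nf zs with hκ2d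
  have hκ1pos : 0 < κ1 := div_pos hD1s hNzs
  have hκ2pos : 0 < κ2 := div_pos hD2s hNzs
  have hab2 : (0:ℝ) < α + β + 2 := by linarith
  have hα1pos : (0:ℝ) < α + 1 := by linarith
  have hβ1pos : (0:ℝ) < β + 1 := by linarith
  set c1 : ℝ := (α + β + 2) * κ1 / (α + 1) with hc1d
  set c2 : ℝ := (α + β + 2) * κ2 / (β + 1) with hc2d
  have hc1pos : 0 < c1 := div_pos (mul_pos hab2 hκ1pos) hα1pos
  have hc2pos : 0 < c2 := div_pos (mul_pos hab2 hκ2pos) hβ1pos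
  set X : ℝ := ((β + 1 - q) * Real.log c1 - (β + 1) * Real.log c2) / Ddet with hXd
  set Y : ℝ := ((α + 1 - p) * Real.log c2 - (α + 1) * Real.log c1) / Ddet with hYd
  set t : ℝ := Real.exp X with htd
  set s : ℝ := Real.exp Y with hsd
  have htpos : 0 < t := Real.exp_pos X
  have hspos : 0 < s := Real.exp_pos Y
  have hexp : ∀ (Z γ : ℝ), Real.exp Z ^ γ = Real.exp (Z * γ) := by
    intro Z γ
    rw [Real.rpow_def_of_pos (Real.exp_pos Z), Real.log_exp]
  have hts1 : t ^ (α + 1 - p) * s ^ (β + 1) = c1 := by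
    rw [htd, hsd, hexp, hexp, ← Real.exp_add]
    rw [show X * (α + 1 - p) + Y * (β + 1) = Real.log c1 by
      rw [hXd, hYd]
      field_simp
      ring]
    exact Real.exp_log hc1pos
  have hts2 : t ^ (α + 1) * s ^ (β + 1 - q) = c2 := by
    rw [htd, hsd, hexp, hexp, ← Real.exp_add]
    rw [show X * (α + 1) + Y * (β + 1 - q) = Real.log c2 by
      rw [hXd, hYd]
      field_simp
      ring]
    exact Real.exp_log hc2pos
  -- final witnesses
  refine ⟨U1 (t • zs.1), U2 (s • zs.2), hU1W0 _, hU2W0 _, ?_, ?_, ?_⟩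
  · rintro ⟨h1, _⟩
    have h2 : (t • zs.1 : ↥S1) = 0 := by
      by_contra h3
      obtain ⟨z, hz⟩ := hU1ne _ h3
      rw [h1] at hz
      exact hz rfl
    rcases smul_eq_zero.mp h2 with h | h
    · exact htpos.ne' h
    · exact hzs1 h
  · -- first equation
    intro φ hφ
    have hφmem : (fun i : {x : V // x ∈ hΩ.toFinset} => φ i.1) ∈ S1 := by
      show exB (fun i => φ i.1) ∈ W0 w Ω m
      rw [exB_restr φ hφ.1]
      exact hφ
    have hφeq : U1 (⟨fun i => φ i.1, hφmem⟩ : ↥S1) = φ := exB_restr φ hφ.1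
    set η : ↥S1 := ⟨fun i => φ i.1, hφmem⟩ with hηd
    rw [← hφeq]
    have huF : U1 (t • zs.1) = t • U1 zs.1 := hU1smul t zs.1
    have hvF : U2 (s • zs.2) = s • U2 zs.2 := hU2smul s zs.2
    have htsplit : t ^ (p - 1) = t ^ (p - 2) * t := by
      rw [← Real.rpow_add_one htpos.ne' (p - 2)]
      congr 1
      ring
    have hgoal1 : ∑ x ∈ hΩ.toFinset, psiW w x *
        (gradmW w m (U1 (t • zs.1)) x ^ (p - 2) * BformW w m (U1 (t • zs.1)) (U1 η) x)
        = t ^ (p - 1) * ∑ x ∈ hΩ.toFinset, psiW w x *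
          (gradmW w m (U1 zs.1) x ^ (p - 2) * BformW w m (U1 zs.1) (U1 η) x) := by
      rw [huF, Finset.mul_sum]
      refine Finset.sum_congr rfl fun x _ => ?_
      rw [gradmW_smul hlf hnn, abs_of_pos htpos,
        Real.mul_rpow htpos.le (gradmW_nonneg _ _ _),
        BformW_smul_left hlf hnn, htsplit]
      ring
    have hgoal2 : ∑ x ∈ hΩ.toFinset, psiW w x *
        (a x * (|U1 (t • zs.1) x| ^ (p - 2) * U1 (t • zs.1) x * U1 η x))
        = t ^ (p - 1) * ∑ x ∈ hΩ.toFinset, psiW w x *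
          (a x * (|U1 zs.1 x| ^ (p - 2) * U1 zs.1 x * U1 η x)) := by
      rw [huF, Finset.mul_sum]
      refine Finset.sum_congr rfl fun x _ => ?_
      have h5 : (t • U1 zs.1) x = t * U1 zs.1 x := rfl
      rw [h5, abs_mul, abs_of_pos htpos, Real.mul_rpow htpos.le (abs_nonneg _), htsplit]
      ring
    have hgoal3 : ∑ x ∈ hΩ.toFinset, psiW w x *
        (|U1 (t • zs.1) x| ^ (α - 1) * U1 (t • zs.1) x * |U2 (s • zs.2) x| ^ (β + 1)
          * U1 η x)
        = t ^ α * s ^ (β + 1) * ∑ x ∈ hΩ.toFinset, psiW w x *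
          (|U1 zs.1 x| ^ (α - 1) * U1 zs.1 x * |U2 zs.2 x| ^ (β + 1) * U1 η x) := by
      rw [huF, hvF, Finset.mul_sum]
      refine Finset.sum_congr rfl fun x _ => ?_
      have h5 : (t • U1 zs.1) x = t * U1 zs.1 x := rfl
      have h6 : (s • U2 zs.2) x = s * U2 zs.2 x := rfl
      rw [h5, h6, abs_mul, abs_mul, abs_of_pos htpos, abs_of_pos hspos,
        Real.mul_rpow htpos.le (abs_nonneg _), Real.mul_rpow hspos.le (abs_nonneg _)]
      rw [show t ^ α = t ^ (α - 1) * t by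
        rw [← Real.rpow_add_one htpos.ne' (α - 1)]
        congr 1
        ring]
      ring
    rw [hgoal1, hgoal2, hgoal3]
    have hkey : (α + 1) / (α + β + 2) * (t ^ α * s ^ (β + 1)) = t ^ (p - 1) * κ1 := by
      have htα : t ^ α = t ^ (p - 1) * t ^ (α + 1 - p) := by
        rw [← Real.rpow_add htpos, show p - 1 + (α + 1 - p) = α by ring]
      rw [htα, show (α + 1) / (α + β + 2) * (t ^ (p - 1) * t ^ (α + 1 - p) * s ^ (β + 1))
          = (α + 1) / (α + β + 2) * t ^ (p - 1) * (t ^ (α + 1 - p) * s ^ (β + 1)) by ring,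
        hts1, hc1d]
      field_simp
    linear_combination t ^ (p - 1) * hK1 η - (∑ x ∈ hΩ.toFinset, psiW w x *
      (|U1 zs.1 x| ^ (α - 1) * U1 zs.1 x * |U2 zs.2 x| ^ (β + 1) * U1 η x)) * hkey
  · -- second equation
    intro φ hφ
    have hφmem : (fun i : {x : V // x ∈ hΩ.toFinset} => φ i.1) ∈ S2 := by
      show exB (fun i => φ i.1) ∈ W0 w Ω n
      rw [exB_restr φ hφ.1]
      exact hφ
    have hφeq : U2 (⟨fun i => φ i.1, hφmem⟩ : ↥S2) = φ := exB_restr φ hφ.1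
    set η : ↥S2 := ⟨fun i => φ i.1, hφmem⟩ with hηd
    rw [← hφeq]
    have huF : U1 (t • zs.1) = t • U1 zs.1 := hU1smul t zs.1
    have hvF : U2 (s • zs.2) = s • U2 zs.2 := hU2smul s zs.2
    have hssplit : s ^ (q - 1) = s ^ (q - 2) * s := by
      rw [← Real.rpow_add_one hspos.ne' (q - 2)]
      congr 1
      ring
    have hgoal1 : ∑ x ∈ hΩ.toFinset, psiW w x *
        (gradmW w n (U2 (s • zs.2)) x ^ (q - 2) * BformW w n (U2 (s • zs.2)) (U2 η) x)
        = s ^ (q - 1) * ∑ x ∈ hΩ.toFinset, psiW w x *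
          (gradmW w n (U2 zs.2) x ^ (q - 2) * BformW w n (U2 zs.2) (U2 η) x) := by
      rw [hvF, Finset.mul_sum]
      refine Finset.sum_congr rfl fun x _ => ?_
      rw [gradmW_smul hlf hnn, abs_of_pos hspos,
        Real.mul_rpow hspos.le (gradmW_nonneg _ _ _),
        BformW_smul_left hlf hnn, hssplit]
      ring
    have hgoal2 : ∑ x ∈ hΩ.toFinset, psiW w x *
        (b x * (|U2 (s • zs.2) x| ^ (q - 2) * U2 (s • zs.2) x * U2 η x))
        = s ^ (q - 1) * ∑ x ∈ hΩ.toFinset, psiW w x *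
          (b x * (|U2 zs.2 x| ^ (q - 2) * U2 zs.2 x * U2 η x)) := by
      rw [hvF, Finset.mul_sum]
      refine Finset.sum_congr rfl fun x _ => ?_
      have h5 : (s • U2 zs.2) x = s * U2 zs.2 x := rfl
      rw [h5, abs_mul, abs_of_pos hspos, Real.mul_rpow hspos.le (abs_nonneg _), hssplit]
      ring
    have hgoal3 : ∑ x ∈ hΩ.toFinset, psiW w x *
        (|U1 (t • zs.1) x| ^ (α + 1) * |U2 (s • zs.2) x| ^ (β - 1) * U2 (s • zs.2) x
          * U2 η x)
        = t ^ (α + 1) * s ^ β * ∑ x ∈ hΩ.toFinset, psiW w x *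
          (|U1 zs.1 x| ^ (α + 1) * |U2 zs.2 x| ^ (β - 1) * U2 zs.2 x * U2 η x) := by
      rw [huF, hvF, Finset.mul_sum]
      refine Finset.sum_congr rfl fun x _ => ?_
      have h5 : (t • U1 zs.1) x = t * U1 zs.1 x := rfl
      have h6 : (s • U2 zs.2) x = s * U2 zs.2 x := rfl
      rw [h5, h6, abs_mul, abs_mul, abs_of_pos htpos, abs_of_pos hspos,
        Real.mul_rpow htpos.le (abs_nonneg _), Real.mul_rpow hspos.le (abs_nonneg _)]
      rw [show s ^ β = s ^ (β - 1) * s by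
        rw [← Real.rpow_add_one hspos.ne' (β - 1)]
        congr 1
        ring]
      ring
    rw [hgoal1, hgoal2, hgoal3]
    have hkey : (β + 1) / (α + β + 2) * (t ^ (α + 1) * s ^ β) = s ^ (q - 1) * κ2 := by
      have hsβ : s ^ β = s ^ (q - 1) * s ^ (β + 1 - q) := by
        rw [← Real.rpow_add hspos, show q - 1 + (β + 1 - q) = β by ring]
      rw [hsβ, show (β + 1) / (α + β + 2) * (t ^ (α + 1) * (s ^ (q - 1) * s ^ (β + 1 - q)))
          = (β + 1) / (α + β + 2) * s ^ (q - 1) * (t ^ (α + 1) * s ^ (β + 1 - q)) by ring,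
        hts2, hc2d]
      field_simp
    linear_combination s ^ (q - 1) * hK2 η - (∑ x ∈ hΩ.toFinset, psiW w x *
      (|U1 zs.1 x| ^ (α + 1) * |U2 zs.2 x| ^ (β - 1) * U2 zs.2 x * U2 η x)) * hkey
end
end

section
/- Let G=(V,ω) be a connected finite or locally finite weighted graph with ω(x,y)≥ω₀>0 whenever x∼y, and assume λ₁>0. Fix O∈V and let m≥1 be an odd integer. If u:V→ℝ is a harmonic eigenfunction of −Δ with eigenvalue λ₁ and ∥u∥ := (∫_V(|∇^m u|²+u²)dψ)^{1/2}<∞, then for every x∈V: |u(x)| ≤ ( √2·λ₁^{(1−m)/2}·ρ(x)/√ω₀ + 1/√ψ(O) )·∥u∥. -/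
noncomputable section

section AuxLemmas

variable {V : Type*}

lemma lapW_const_mul (w : V → V → ℝ) (c : ℝ) (u : V → ℝ) (x : V) :
    lapW w (fun y => c * u y) x = c * lapW w u x := by
  unfold lapW
  rw [tsum_congr (fun y =>
      show w x y * (c * u y - c * u x) = c * (w x y * (u y - u x)) by ring),
    tsum_mul_left]
  ring

lemma gradW_const_mul (w : V → V → ℝ) (c : ℝ) (u : V → ℝ) (x : V) :
    gradW w (fun y => c * u y) x = |c| * gradW w u x := by
  unfold gradW gammaW
  rw [tsum_congr (fun y => show w x y * (c * u y - c * u x) * (c * u y - c * u x)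
      = c ^ 2 * (w x y * (u y - u x) * (u y - u x)) by ring), tsum_mul_left,
    show (2 * psiW w x)⁻¹ * (c ^ 2 * ∑' y, w x y * (u y - u x) * (u y - u x))
      = c ^ 2 * ((2 * psiW w x)⁻¹ * ∑' y, w x y * (u y - u x) * (u y - u x)) by ring,
    Real.sqrt_mul (sq_nonneg c), Real.sqrt_sq_eq_abs]

lemma tele_bound (u : V → ℝ) (C : ℝ) (f : ℕ → V) :
    ∀ n : ℕ, (∀ i < n, |u (f (i + 1)) - u (f i)| ≤ C) →
      |u (f n) - u (f 0)| ≤ (n : ℝ) * C := by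
  intro n
  induction n with
  | zero => intro _; simp
  | succ n ih =>
    intro h
    have h1 := ih fun i hi => h i (by omega)
    have h2 := h n (by omega)
    have h3 := abs_sub_le (u (f (n + 1))) (u (f n)) (u (f 0))
    push_cast
    linarith

lemma exists_chain (w : V → V → ℝ) {O x : V}
    (h : Relation.ReflTransGen (fun a b => 0 < w a b) O x) :
    ∃ n : ℕ, ∃ f : ℕ → V, f 0 = O ∧ f n = x ∧ ∀ i < n, 0 < w (f i) (f (i + 1)) := by
  induction h with
  | refl => exact ⟨0, fun _ => O, rfl, rfl, fun i hi => by omega⟩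
  | @tail b c hab hbc ih =>
    obtain ⟨n, f, h0, hn, he⟩ := ih
    refine ⟨n + 1, fun i => if i ≤ n then f i else c, by simp [h0],
      show (if n + 1 ≤ n then f (n + 1) else c) = c from if_neg (by omega), ?_⟩
    intro i hi
    show 0 < w (if i ≤ n then f i else c) (if i + 1 ≤ n then f (i + 1) else c)
    rcases Nat.lt_or_ge i n with h | h
    · rw [if_pos (show i ≤ n by omega), if_pos (show i + 1 ≤ n by omega)]
      exact he i h
    · have hi' : i = n := by omega
      rw [if_pos (show i ≤ n by omega), if_neg (show ¬ i + 1 ≤ n by omega), hi', hn]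
      exact hbc

lemma summable_w (w : V → V → ℝ) (hnn : ∀ x y, 0 ≤ w x y) (hlf : LocFinW w)
    (x : V) (g : V → ℝ) : Summable fun y => w x y * g y := by
  apply summable_of_ne_finset_zero (s := (hlf x).toFinset)
  intro y hy
  have h0 : w x y = 0 := by
    by_contra h
    exact hy ((hlf x).mem_toFinset.mpr (lt_of_le_of_ne (hnn x y) (Ne.symm h)))
  simp [h0]

end AuxLemmas

/-- pointwise bound for eigenfunctions, odd order. -/
theorem eigenfunction_pointwise_bound_odd {V : Type*} [Countable V] (w : V → V → ℝ)
    (hsymm : ∀ x y, w x y = w y x) (hnn : ∀ x y, 0 ≤ w x y)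
    (hlf : LocFinW w) (hψ : ∀ x, 0 < psiW w x) (hconn : ConnW w)
    (ω₀ : ℝ) (hω₀ : 0 < ω₀) (hedge : ∀ x y, 0 < w x y → ω₀ ≤ w x y)
    (hlam : 0 < lambda1W w) (O : V)
    (m : ℕ) (hm : 1 ≤ m) (hodd : m % 2 = 1)
    (u : V → ℝ) (hu : IsEigW w u)
    (hsum : Summable (fun y => psiW w y * (gradmW w m u y ^ 2 + u y ^ 2))) :
    ∀ x : V, |u x| ≤
      (Real.sqrt 2 * lambda1W w ^ ((1 - (m : ℝ)) / 2) * (gdistW w O x : ℝ) / Real.sqrt ω₀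
        + 1 / Real.sqrt (psiW w O)) *
      Real.sqrt (∑' y, psiW w y * (gradmW w m u y ^ 2 + u y ^ 2)) := by
  intro x
  set lam := lambda1W w with hlamdef
  obtain ⟨k, hk⟩ : ∃ k, m = 2 * k + 1 := ⟨m / 2, by omega⟩
  set S := ∑' y, psiW w y * (gradmW w m u y ^ 2 + u y ^ 2) with hSdef
  have hS0 : 0 ≤ S := tsum_nonneg fun y => mul_nonneg (hψ y).le (by positivity)
  have hlamk : (0:ℝ) < lam ^ k := pow_pos hlam k
  -- eigenfunction iteration
  have h1 : ∀ z, lapW w u z = -lam * u z := fun z => by have := hu z; linarith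
  have h2 : ∀ j, (lapW w)^[j] u = fun z => (-lam) ^ j * u z := by
    intro j
    induction j with
    | zero => funext z; simp
    | succ j ih =>
      funext z
      rw [Function.iterate_succ_apply', ih]
      show lapW w (fun z => (-lam) ^ j * u z) z = _
      rw [lapW_const_mul, h1 z]
      ring
  have h3 : ∀ y, gradmW w m u y = lam ^ k * gradW w u y := by
    intro y
    rw [gradmW, if_pos hodd, show (m - 1) / 2 = k by omega, h2 k, gradW_const_mul,
      abs_pow, abs_neg, abs_of_pos hlam]
  -- each term bounded by S
  have hterm_le : ∀ y, psiW w y * (gradmW w m u y ^ 2 + u y ^ 2) ≤ S :=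
    fun y => Summable.le_tsum hsum y fun j _ => mul_nonneg (hψ j).le (by positivity)
  have hgm_le : ∀ y, psiW w y * gradmW w m u y ^ 2 ≤ S := by
    intro y
    have := hterm_le y
    nlinarith [sq_nonneg (u y), (hψ y).le]
  have hu_le : ∀ y, psiW w y * u y ^ 2 ≤ S := by
    intro y
    have := hterm_le y
    nlinarith [sq_nonneg (gradmW w m u y), (hψ y).le]
  -- bound at O
  have hψO : (0:ℝ) < Real.sqrt (psiW w O) := Real.sqrt_pos.mpr (hψ O)
  have huO : |u O| ≤ 1 / Real.sqrt (psiW w O) * Real.sqrt S := by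
    have h := Real.sqrt_le_sqrt (hu_le O)
    rw [Real.sqrt_mul (hψ O).le, Real.sqrt_sq_eq_abs] at h
    rw [div_mul_eq_mul_div, one_mul, le_div_iff₀ hψO]
    linarith [mul_comm (Real.sqrt (psiW w O)) (|u O|)]
  -- rpow identity
  have hrpow : lam ^ ((1 - (m : ℝ)) / 2) = (lam ^ k)⁻¹ := by
    have he : ((1 - (m : ℝ)) / 2) = -(k : ℝ) := by rw [hk]; push_cast; ring
    rw [he, Real.rpow_neg hlam.le, Real.rpow_natCast]
  set C := Real.sqrt 2 * lam ^ ((1 - (m : ℝ)) / 2) / Real.sqrt ω₀ * Real.sqrt S with hCdef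
  have hC0 : 0 ≤ C := by
    rw [hCdef, hrpow]
    have : (0:ℝ) ≤ (lam ^ k)⁻¹ := by positivity
    positivity
  have hC2 : C ^ 2 = 2 * ((lam ^ k)⁻¹) ^ 2 * S / ω₀ := by
    have e2 : Real.sqrt 2 ^ 2 = 2 := Real.sq_sqrt (by norm_num)
    have eω : Real.sqrt ω₀ ^ 2 = ω₀ := Real.sq_sqrt hω₀.le
    have eS : Real.sqrt S ^ 2 = S := Real.sq_sqrt hS0
    rw [hCdef, hrpow,
      show (Real.sqrt 2 * (lam ^ k)⁻¹ / Real.sqrt ω₀ * Real.sqrt S) ^ 2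
        = Real.sqrt 2 ^ 2 * ((lam ^ k)⁻¹) ^ 2 * Real.sqrt S ^ 2 / Real.sqrt ω₀ ^ 2 by ring,
      e2, eω, eS]
  -- edge bound
  have key : ∀ a b, 0 < w a b → |u b - u a| ≤ C := by
    intro a b hab
    have hsumg : Summable fun y => w a y * (u y - u a) * (u y - u a) :=
      (summable_w w hnn hlf a fun y => (u y - u a) * (u y - u a)).congr
        fun y => by ring
    have h1' : w a b * (u b - u a) * (u b - u a)
        ≤ ∑' y, w a y * (u y - u a) * (u y - u a) :=
      Summable.le_tsum hsumg b fun j _ => by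
        rw [mul_assoc]; exact mul_nonneg (hnn a j) (mul_self_nonneg _)
    have h2ψ : (0:ℝ) < 2 * psiW w a := by linarith [hψ a]
    have hγ : 0 ≤ gammaW w u u a := by
      unfold gammaW
      exact mul_nonneg (inv_nonneg.mpr h2ψ.le)
        (tsum_nonneg fun y => by
          rw [mul_assoc]; exact mul_nonneg (hnn a y) (mul_self_nonneg _))
    have hSig : (∑' y, w a y * (u y - u a) * (u y - u a))
        = 2 * psiW w a * gammaW w u u a := by
      unfold gammaW
      rw [← mul_assoc, mul_inv_cancel₀ h2ψ.ne', one_mul]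
    have hgrad2 : gradW w u a ^ 2 = gammaW w u u a := Real.sq_sqrt hγ
    have hgm : gradW w u a = (lam ^ k)⁻¹ * gradmW w m u a := by
      rw [h3 a, ← mul_assoc, inv_mul_cancel₀ hlamk.ne', one_mul]
    have A1 : ω₀ * (u b - u a) ^ 2 ≤ w a b * (u b - u a) ^ 2 :=
      mul_le_mul_of_nonneg_right (hedge a b hab) (sq_nonneg _)
    have A2 : w a b * (u b - u a) ^ 2 ≤ 2 * psiW w a * gammaW w u u a := by
      rw [← hSig]
      calc w a b * (u b - u a) ^ 2 = w a b * (u b - u a) * (u b - u a) := by ring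
        _ ≤ _ := h1'
    have A3 : 2 * psiW w a * gammaW w u u a
        = 2 * ((lam ^ k)⁻¹) ^ 2 * (psiW w a * gradmW w m u a ^ 2) := by
      rw [← hgrad2, hgm]; ring
    have A4 : 2 * ((lam ^ k)⁻¹) ^ 2 * (psiW w a * gradmW w m u a ^ 2)
        ≤ 2 * ((lam ^ k)⁻¹) ^ 2 * S :=
      mul_le_mul_of_nonneg_left (hgm_le a) (by positivity)
    have hd2 : (u b - u a) ^ 2 ≤ C ^ 2 := by
      rw [hC2, le_div_iff₀ hω₀]
      nlinarith
    have := Real.sqrt_le_sqrt hd2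
    rwa [Real.sqrt_sq_eq_abs, Real.sqrt_sq hC0] at this
  -- path from O to x
  obtain ⟨n₁, f₁, hne⟩ := exists_chain w (hconn O x)
  have hmem : gdistW w O x ∈ {n : ℕ | ∃ f : ℕ → V, f 0 = O ∧ f n = x ∧
      ∀ i < n, 0 < w (f i) (f (i + 1))} := Nat.sInf_mem ⟨n₁, f₁, hne⟩
  obtain ⟨f, hf0, hfn, hfe⟩ := hmem
  have htel := tele_bound u C f (gdistW w O x) fun i hi => key _ _ (hfe i hi)
  rw [hf0, hfn] at htel
  have habs : |u x| ≤ |u x - u O| + |u O| := by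
    calc |u x| = |(u x - u O) + u O| := by ring_nf
      _ ≤ |u x - u O| + |u O| := abs_add_le _ _
  have hrhs : (Real.sqrt 2 * lam ^ ((1 - (m : ℝ)) / 2) * (gdistW w O x : ℝ) / Real.sqrt ω₀
        + 1 / Real.sqrt (psiW w O)) * Real.sqrt S
      = (gdistW w O x : ℝ) * C + 1 / Real.sqrt (psiW w O) * Real.sqrt S := by
    rw [hCdef]; ring
  rw [hrhs]
  linarith
end
end

section
/- (Strong maximum principle.) Let G=(V,ω) be a connected finite or locally finite weighted graph, let p,q≥2, and let h₁,h₂:V→ℝ be arbitrary functions. Suppose u,v:V→ℝ satisfy u(x)≥0 and v(x)≥0 for all x∈V, −Δ_p u(x)+h₁(x)|u(x)|^{p−2}u(x)≥0 for all x∈V, and −Δ_q v(x)+h₂(x)|v(x)|^{q−2}v(x)≥0 for all x∈V. If there exist x₀∈V with u(x₀)=0 and x₁∈V with v(x₁)=0, then u(x)=0 and v(x)=0 for all x∈V. -/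
noncomputable section

lemma prop_zero_aux {V : Type*} [Countable V] (w : V → V → ℝ)
    (hnn : ∀ x y, 0 ≤ w x y) (hlf : LocFinW w) (hψ : ∀ x, 0 < psiW w x)
    (p : ℝ) (h₁ : V → ℝ) (u : V → ℝ)
    (hu0 : ∀ x, 0 ≤ u x)
    (hu : ∀ x, 0 ≤ -plapW w p u x + h₁ x * (|u x| ^ (p - 2) * u x))
    {x y : V} (hx : u x = 0) (hw : 0 < w x y) : u y = 0 := by
  by_contra hy
  have huy : 0 < u y := lt_of_le_of_ne (hu0 y) (Ne.symm hy)
  have hs : ∀ (f : V → ℝ), (∀ z, w x z = 0 → f z = 0) → Summable f := by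
    intro f hf
    apply summable_of_ne_finset_zero (s := (hlf x).toFinset)
    intro z hz
    apply hf
    have h1 : ¬ 0 < w x z := by simpa using hz
    linarith [hnn x z]
  have hgx : 0 < gradW w u x := by
    rw [gradW, Real.sqrt_pos, gammaW]
    have hf : ∀ z, 0 ≤ w x z * (u z - u x) * (u z - u x) := by
      intro z; rw [mul_assoc]; exact mul_nonneg (hnn x z) (mul_self_nonneg _)
    have hsum : Summable (fun z => w x z * (u z - u x) * (u z - u x)) := by
      apply hs; intro z hz; rw [hz]; ring
    have hpos : 0 < w x y * (u y - u x) * (u y - u x) := by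
      rw [hx, sub_zero]; positivity
    have ht : 0 < ∑' z, w x z * (u z - u x) * (u z - u x) :=
      Summable.tsum_pos hsum hf y hpos
    have h2 : (0:ℝ) < (2 * psiW w x)⁻¹ := by
      apply inv_pos.mpr; linarith [hψ x]
    exact mul_pos h2 ht
  have hcpos : ∀ z, 0 < gradW w u z ^ (p - 2) + gradW w u x ^ (p - 2) := by
    intro z
    have h1 : (0:ℝ) ≤ gradW w u z ^ (p - 2) :=
      Real.rpow_nonneg (Real.sqrt_nonneg _) _
    have h2 : (0:ℝ) < gradW w u x ^ (p - 2) := Real.rpow_pos_of_pos hgx _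
    linarith
  have hplap : 0 < plapW w p u x := by
    rw [plapW]
    have hf : ∀ z, 0 ≤ w x z * (gradW w u z ^ (p - 2) + gradW w u x ^ (p - 2)) * (u z - u x) := by
      intro z; rw [hx, sub_zero]
      exact mul_nonneg (mul_nonneg (hnn x z) (le_of_lt (hcpos z))) (hu0 z)
    have hsum : Summable (fun z => w x z * (gradW w u z ^ (p - 2) + gradW w u x ^ (p - 2)) * (u z - u x)) := by
      apply hs; intro z hz; rw [hz]; ring
    have hpos : 0 < w x y * (gradW w u y ^ (p - 2) + gradW w u x ^ (p - 2)) * (u y - u x) := by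
      rw [hx, sub_zero]; exact mul_pos (mul_pos hw (hcpos y)) huy
    have ht := Summable.tsum_pos hsum hf y hpos
    have h2 : (0:ℝ) < (2 * psiW w x)⁻¹ := by
      apply inv_pos.mpr; linarith [hψ x]
    exact mul_pos h2 ht
  have h3 := hu x
  rw [hx] at h3
  simp at h3
  linarith

lemma prop_zero_chain {V : Type*} [Countable V] (w : V → V → ℝ)
    (hnn : ∀ x y, 0 ≤ w x y) (hlf : LocFinW w) (hψ : ∀ x, 0 < psiW w x)
    (p : ℝ) (h₁ : V → ℝ) (u : V → ℝ)
    (hu0 : ∀ x, 0 ≤ u x)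
    (hu : ∀ x, 0 ≤ -plapW w p u x + h₁ x * (|u x| ^ (p - 2) * u x))
    {x y : V} (hx : u x = 0)
    (h : Relation.ReflTransGen (fun a b => 0 < w a b) x y) : u y = 0 := by
  induction h with
  | refl => exact hx
  | tail _ h2 ih => exact prop_zero_aux w hnn hlf hψ p h₁ u hu0 hu ih h2

/-- strong maximum principle for a pair of functions. -/
theorem strong_maximum_principle_pair {V : Type*} [Countable V] (w : V → V → ℝ)
    (hsymm : ∀ x y, w x y = w y x) (hnn : ∀ x y, 0 ≤ w x y)
    (hlf : LocFinW w) (hψ : ∀ x, 0 < psiW w x) (hconn : ConnW w)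
    (p q : ℝ) (hp : 2 ≤ p) (hq : 2 ≤ q)
    (h₁ h₂ : V → ℝ) (u v : V → ℝ)
    (hu0 : ∀ x, 0 ≤ u x) (hv0 : ∀ x, 0 ≤ v x)
    (hu : ∀ x, 0 ≤ -plapW w p u x + h₁ x * (|u x| ^ (p - 2) * u x))
    (hv : ∀ x, 0 ≤ -plapW w q v x + h₂ x * (|v x| ^ (q - 2) * v x))
    (x₀ : V) (hx₀ : u x₀ = 0) (x₁ : V) (hx₁ : v x₁ = 0) :
    ∀ x : V, u x = 0 ∧ v x = 0 := by
  intro x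
  exact ⟨prop_zero_chain w hnn hlf hψ p h₁ u hu0 hu hx₀ (hconn x₀ x),
    prop_zero_chain w hnn hlf hψ q h₂ v hv0 hv hx₁ (hconn x₁ x)⟩
end
end

section
/- Let G=(V,ω) be a connected finite or locally finite weighted graph, p≥2, and h:V→ℝ an arbitrary function. Suppose u:V→ℝ satisfies u(x)≥0 for all x∈V and −Δ_p u(x)+h(x)|u(x)|^{p−2}u(x)≥0 for all x∈V. If u(x₀)=0 for some x₀∈V, then u(x)=0 for all x∈V. -/
noncomputable section

lemma summable_aux {V : Type*} {w : V → V → ℝ} (hlf : LocFinW w) (hnn : ∀ x y, 0 ≤ w x y)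
    (x : V) (g : V → ℝ) : Summable (fun y => w x y * g y) := by
  apply summable_of_finite_support
  apply (hlf x).subset
  intro y hy
  simp only [Function.mem_support] at hy
  rcases lt_or_eq_of_le (hnn x y) with h | h
  · exact h
  · simp [← h] at hy

lemma smp_key {V : Type*} (w : V → V → ℝ)
    (hnn : ∀ x y, 0 ≤ w x y)
    (hlf : LocFinW w) (hψ : ∀ x, 0 < psiW w x)
    (p : ℝ) (h : V → ℝ) (u : V → ℝ)
    (hu0 : ∀ x, 0 ≤ u x)
    (hu : ∀ x, 0 ≤ -plapW w p u x + h x * (|u x| ^ (p - 2) * u x))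
    (x : V) (hx : u x = 0) (y : V) (hw : 0 < w x y) : u y = 0 := by
  have hψx := hψ x
  have hc : (0:ℝ) < (2 * psiW w x)⁻¹ := by positivity
  set A : V → ℝ := fun z => gradW w u z ^ (p - 2) with hA
  have hAnn : ∀ z, 0 ≤ A z := fun z => Real.rpow_nonneg (Real.sqrt_nonneg _) _
  set f : V → ℝ := fun z => w x z * (A z + A x) * (u z - u x) with hfdef
  have hfnn : ∀ z, 0 ≤ f z := by
    intro z
    have h1 : 0 ≤ u z - u x := by rw [hx, sub_zero]; exact hu0 z
    exact mul_nonneg (mul_nonneg (hnn x z) (add_nonneg (hAnn z) (hAnn x))) h1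
  have hsum : Summable f := by
    have := summable_aux hlf hnn x (fun z => (A z + A x) * (u z - u x))
    simpa [hfdef, mul_assoc] using this
  have hple : plapW w p u x ≤ 0 := by
    have := hu x
    rw [hx] at this
    simpa using this
  have hS : ∑' z, f z ≤ 0 := by
    have : (2 * psiW w x)⁻¹ * ∑' z, f z ≤ 0 := hple
    nlinarith [this]
  have hfy0 : f y = 0 := le_antisymm (le_trans (Summable.le_tsum hsum y fun z _ => hfnn z) hS) (hfnn y)
  have h2 : (A y + A x) * u y = 0 := by
    have : w x y * ((A y + A x) * u y) = 0 := by
      have := hfy0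
      rw [hfdef] at this
      simp only [hx, sub_zero] at this
      linarith [this, mul_assoc (w x y) (A y + A x) (u y)]
    exact (mul_eq_zero.1 this).resolve_left (ne_of_gt hw)
  rcases mul_eq_zero.1 h2 with hcase | hy0
  · have hAx : A x = 0 := by
      have := hAnn y; have := hAnn x; linarith
    have hgrad : gradW w u x = 0 := by
      rw [hA] at hAx
      exact ((Real.rpow_eq_zero_iff_of_nonneg (Real.sqrt_nonneg _)).1 hAx).1
    set g : V → ℝ := fun z => w x z * (u z - u x) * (u z - u x) with hgdef
    have hgnn : ∀ z, 0 ≤ g z := fun z =>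
      mul_nonneg (mul_nonneg (hnn x z) (by rw [hx, sub_zero]; exact hu0 z))
        (by rw [hx, sub_zero]; exact hu0 z)
    have hgsum : Summable g := by
      have := summable_aux hlf hnn x (fun z => (u z - u x) * (u z - u x))
      simpa [hgdef, mul_assoc] using this
    have hgamnn : 0 ≤ ∑' z, g z := tsum_nonneg hgnn
    have hgam : gammaW w u u x = 0 := by
      have h1 : 0 ≤ gammaW w u u x := mul_nonneg hc.le hgamnn
      have h2 : gammaW w u u x ≤ 0 := Real.sqrt_eq_zero'.1 hgrad
      linarith
    have hT : ∑' z, g z = 0 := by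
      have : (2 * psiW w x)⁻¹ * ∑' z, g z = 0 := hgam
      rcases mul_eq_zero.1 this with h | h
      · exact absurd h (ne_of_gt hc)
      · exact h
    have hgy : g y = 0 :=
      le_antisymm (hT ▸ Summable.le_tsum hgsum y fun z _ => hgnn z) (hgnn y)
    rw [hgdef] at hgy
    simp only [hx, sub_zero] at hgy
    rcases mul_eq_zero.1 hgy with h | h
    · rcases mul_eq_zero.1 h with h' | h'
      · exact absurd h' (ne_of_gt hw)
      · exact h'
    · exact h
  · exact hy0

/-- strong maximum principle for a single function. -/
theorem strong_maximum_principle {V : Type*} [Countable V] (w : V → V → ℝ)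
    (hsymm : ∀ x y, w x y = w y x) (hnn : ∀ x y, 0 ≤ w x y)
    (hlf : LocFinW w) (hψ : ∀ x, 0 < psiW w x) (hconn : ConnW w)
    (p : ℝ) (hp : 2 ≤ p) (h : V → ℝ) (u : V → ℝ)
    (hu0 : ∀ x, 0 ≤ u x)
    (hu : ∀ x, 0 ≤ -plapW w p u x + h x * (|u x| ^ (p - 2) * u x))
    (x₀ : V) (hx₀ : u x₀ = 0) :
    ∀ x : V, u x = 0 := by
  intro x
  have hchain := hconn x₀ x
  induction hchain with
  | refl => exact hx₀
  | tail _ hbc ih => exact smp_key w hnn hlf hψ p h u hu0 hu _ ih _ hbc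
end
end

section
/- Let G=(V,ω) be a connected finite weighted graph with ω(x,y)≥ω₀>0 whenever x∼y, and let m,n≥1 be integers. Then for every ε>0 there exists a constant C>0, depending only on G, ω₀, m, n and ε, such that for all pairs (u,v) of harmonic eigenfunctions of −Δ with eigenvalue λ₁: log∫_V e^{2u−v}dψ ≤ C + 2ε·∫_V(|∇^m u|²+u²)dψ + ε·∫_V(|∇^n v|²+v²)dψ, and log∫_V e^{−u+2v}dψ ≤ C + ε·∫_V(|∇^m u|²+u²)dψ + 2ε·∫_V(|∇^n v|²+v²)dψ. -/
noncomputable section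

lemma intW_fintype {V : Type*} [Fintype V] (w : V → V → ℝ) (f : V → ℝ) :
    intW w f = ∑ x, psiW w x * f x := tsum_fintype _

lemma amgm_sqrt (ε p A : ℝ) (hε : 0 < ε) (hp : 0 < p) (hA : 0 ≤ A) :
    2 * Real.sqrt (A / p) ≤ 1 / (ε * p) + ε * A := by
  have hX : (0:ℝ) ≤ 1 / (ε * p) := by positivity
  have hY : (0:ℝ) ≤ ε * A := by positivity
  have h1 : Real.sqrt (A / p) = Real.sqrt (1 / (ε * p)) * Real.sqrt (ε * A) := by
    rw [← Real.sqrt_mul hX]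
    congr 1
    field_simp
  rw [h1]
  have h2 := two_mul_le_add_sq (Real.sqrt (1 / (ε * p))) (Real.sqrt (ε * A))
  rw [Real.sq_sqrt hX, Real.sq_sqrt hY] at h2
  linarith

/-- logarithmic Moser–Trudinger-type estimates for pairs of harmonic
eigenfunctions. -/
theorem log_exp_estimate_eigenfunctions {V : Type*} [Fintype V] (w : V → V → ℝ)
    (hsymm : ∀ x y, w x y = w y x) (hnn : ∀ x y, 0 ≤ w x y)
    (hψ : ∀ x, 0 < psiW w x) (hconn : ConnW w)
    (ω₀ : ℝ) (hω₀ : 0 < ω₀) (hedge : ∀ x y, 0 < w x y → ω₀ ≤ w x y)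
    (m n : ℕ) (hm : 1 ≤ m) (hn : 1 ≤ n) :
    ∀ ε > 0, ∃ C > 0, ∀ u v : V → ℝ, IsEigW w u → IsEigW w v →
      Real.log (intW w (fun x => Real.exp (2 * u x - v x))) ≤
        C + 2 * ε * intW w (fun x => gradmW w m u x ^ 2 + u x ^ 2)
          + ε * intW w (fun x => gradmW w n v x ^ 2 + v x ^ 2) ∧
      Real.log (intW w (fun x => Real.exp (-u x + 2 * v x))) ≤
        C + ε * intW w (fun x => gradmW w m u x ^ 2 + u x ^ 2)
          + 2 * ε * intW w (fun x => gradmW w n v x ^ 2 + v x ^ 2) := by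
  intro ε hε
  cases isEmpty_or_nonempty V with
  | inl h =>
    refine ⟨1, one_pos, fun u v _ _ => ?_⟩
    have hz : ∀ f : V → ℝ, intW w f = 0 := by
      intro f; rw [intW_fintype]; simp
    simp only [hz, Real.log_zero]
    constructor <;> nlinarith [hε]
  | inr h =>
    set S := ∑ x, psiW w x with hSdef
    have hSpos : 0 < S := Finset.sum_pos (fun x _ => hψ x) Finset.univ_nonempty
    obtain ⟨x0, -, hx0⟩ := Finset.exists_min_image Finset.univ (psiW w)
      ⟨Classical.arbitrary V, Finset.mem_univ _⟩
    set p := psiW w x0 with hpdef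
    have hp : 0 < p := hψ x0
    have hpmin : ∀ x, p ≤ psiW w x := fun x => hx0 x (Finset.mem_univ x)
    refine ⟨|Real.log S| + 2 / (ε * p) + 1, by positivity, fun u v hu hv => ?_⟩
    set A := ∑ x, psiW w x * u x ^ 2 with hAdef
    set B := ∑ x, psiW w x * v x ^ 2 with hBdef
    have hA : 0 ≤ A := Finset.sum_nonneg fun x _ => mul_nonneg (hψ x).le (sq_nonneg _)
    have hB : 0 ≤ B := Finset.sum_nonneg fun x _ => mul_nonneg (hψ x).le (sq_nonneg _)
    have habs : ∀ (f : V → ℝ) x, |f x| ≤ Real.sqrt ((∑ y, psiW w y * f y ^ 2) / p) := by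
      intro f x
      have h1 : p * f x ^ 2 ≤ ∑ y, psiW w y * f y ^ 2 := by
        calc p * f x ^ 2 ≤ psiW w x * f x ^ 2 := by nlinarith [hpmin x, sq_nonneg (f x)]
          _ ≤ ∑ y, psiW w y * f y ^ 2 :=
            Finset.single_le_sum (f := fun y => psiW w y * f y ^ 2)
              (fun y _ => mul_nonneg (hψ y).le (sq_nonneg _)) (Finset.mem_univ x)
      have h2 : f x ^ 2 ≤ (∑ y, psiW w y * f y ^ 2) / p :=
        (le_div_iff₀ hp).mpr (by linarith [mul_comm p (f x ^ 2)])
      calc |f x| = Real.sqrt (f x ^ 2) := (Real.sqrt_sq_eq_abs _).symm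
        _ ≤ _ := Real.sqrt_le_sqrt h2
    set a := Real.sqrt (A / p) with hadef
    set b := Real.sqrt (B / p) with hbdef
    have ha : 0 ≤ a := Real.sqrt_nonneg _
    have hb : 0 ≤ b := Real.sqrt_nonneg _
    have h2a : 2 * a ≤ 1 / (ε * p) + ε * A := amgm_sqrt ε p A hε hp hA
    have h2b : 2 * b ≤ 1 / (ε * p) + ε * B := amgm_sqrt ε p B hε hp hB
    have key : ∀ (f : V → ℝ) (M : ℝ), (∀ x, f x ≤ M) →
        Real.log (intW w (fun x => Real.exp (f x))) ≤ Real.log S + M := by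
      intro f M hM
      have hpos : 0 < intW w (fun x => Real.exp (f x)) := by
        rw [intW_fintype]
        exact Finset.sum_pos (fun x _ => mul_pos (hψ x) (Real.exp_pos _)) Finset.univ_nonempty
      have hle : intW w (fun x => Real.exp (f x)) ≤ S * Real.exp M := by
        rw [intW_fintype]
        calc ∑ x, psiW w x * Real.exp (f x) ≤ ∑ x, psiW w x * Real.exp M :=
            Finset.sum_le_sum fun x _ =>
              mul_le_mul_of_nonneg_left (Real.exp_le_exp.2 (hM x)) (hψ x).le
          _ = S * Real.exp M := by rw [← Finset.sum_mul]
      calc Real.log (intW w (fun x => Real.exp (f x)))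
          ≤ Real.log (S * Real.exp M) := Real.log_le_log hpos hle
        _ = Real.log S + M := by
            rw [Real.log_mul hSpos.ne' (Real.exp_pos M).ne', Real.log_exp]
    have hIu : A ≤ intW w (fun x => gradmW w m u x ^ 2 + u x ^ 2) := by
      rw [intW_fintype]
      apply Finset.sum_le_sum
      intro x _
      have h1 := sq_nonneg (gradmW w m u x)
      nlinarith [(hψ x).le]
    have hIv : B ≤ intW w (fun x => gradmW w n v x ^ 2 + v x ^ 2) := by
      rw [intW_fintype]
      apply Finset.sum_le_sum
      intro x _
      have h1 := sq_nonneg (gradmW w n v x)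
      nlinarith [(hψ x).le]
    have hIu0 : 0 ≤ intW w (fun x => gradmW w m u x ^ 2 + u x ^ 2) := hA.trans hIu
    have hIv0 : 0 ≤ intW w (fun x => gradmW w n v x ^ 2 + v x ^ 2) := hB.trans hIv
    have hεIu : ε * A ≤ ε * intW w (fun x => gradmW w m u x ^ 2 + u x ^ 2) :=
      mul_le_mul_of_nonneg_left hIu hε.le
    have hεIv : ε * B ≤ ε * intW w (fun x => gradmW w n v x ^ 2 + v x ^ 2) :=
      mul_le_mul_of_nonneg_left hIv hε.le
    have hlogS : Real.log S ≤ |Real.log S| := le_abs_self _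
    have h2e : 1 / (ε * p) + 1 / (ε * p) = 2 / (ε * p) := by ring
    constructor
    · have hM : ∀ x, 2 * u x - v x ≤ 2 * a + b := by
        intro x
        have h1 := habs u x
        have h2 := habs v x
        have h3 := le_abs_self (u x)
        have h4 := neg_le_abs (v x)
        rw [← hAdef] at h1
        rw [← hBdef] at h2
        rw [← hadef] at h1
        rw [← hbdef] at h2
        linarith
      have := key (fun x => 2 * u x - v x) (2 * a + b) hM
      nlinarith [hεIu, hεIv, hIu0, hIv0]
    · have hM : ∀ x, -u x + 2 * v x ≤ a + 2 * b := by
        intro x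
        have h1 := habs u x
        have h2 := habs v x
        have h3 := neg_le_abs (u x)
        have h4 := le_abs_self (v x)
        rw [← hAdef] at h1
        rw [← hBdef] at h2
        rw [← hadef] at h1
        rw [← hbdef] at h2
        linarith
      have := key (fun x => -u x + 2 * v x) (a + 2 * b) hM
      nlinarith [hεIu, hεIv, hIu0, hIv0]
end
end
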